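/- arXiv:1110.5111 — 2 statements merged into one kernel-verified Lean document; each statement's English description precedes it below -/
import Mathlib

section
/- If (A, B) is a deletion-minimal homogeneous pair of strong cliques in a trigraph G, then there is a square-connected homogeneous pair of strong cliques (A', B') in G such that A' ⊆ A and B' ⊆ B. -/
/-- A trigraph on a vertex type `V`: a symmetric adjacency function with values in
`{1, 0, -1}`, zero on the diagonal, such that semiedges form a matching. -/
structure Trigraph (V : Type) where
  θ : V → V → ℤ
  range_mem : ∀ u v, θ u v = 1 ∨ θ u v = 0 ∨ θ u v = -1
  symm : ∀ u v, θ u v = θ v u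
  refl_zero : ∀ v, θ v v = 0
  semi_matching : ∀ u v w : V, u ≠ v → u ≠ w → v ≠ w → θ u v = 0 → θ u w ≠ 0

namespace Trigraph

variable {V V' V'' : Type}

/-- `u` and `v` are strongly adjacent. -/
def StrongAdj (G : Trigraph V) (u v : V) : Prop := G.θ u v = 1

/-- Distinct `u` and `v` are semiadjacent. -/
def SemiAdj (G : Trigraph V) (u v : V) : Prop := u ≠ v ∧ G.θ u v = 0

/-- Distinct `u` and `v` are adjacent. -/
def Adj (G : Trigraph V) (u v : V) : Prop := u ≠ v ∧ (G.θ u v = 1 ∨ G.θ u v = 0)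

/-- Distinct `u` and `v` are antiadjacent. -/
def AntiAdj (G : Trigraph V) (u v : V) : Prop := u ≠ v ∧ (G.θ u v = 0 ∨ G.θ u v = -1)

/-- `u` and `v` are strongly antiadjacent. -/
def StrongAntiAdj (G : Trigraph V) (u v : V) : Prop := G.θ u v = -1

/-- `X` is strongly complete to `Y`. -/
def StronglyComplete (G : Trigraph V) (X Y : Set V) : Prop :=
  ∀ u ∈ X, ∀ v ∈ Y, G.StrongAdj u v

/-- `X` is strongly anticomplete to `Y`. -/
def StronglyAnticomplete (G : Trigraph V) (X Y : Set V) : Prop :=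
  ∀ u ∈ X, ∀ v ∈ Y, G.StrongAntiAdj u v

/-- A strong clique: pairwise strongly adjacent vertices. -/
def IsStrongClique (G : Trigraph V) (K : Set V) : Prop := K.Pairwise G.StrongAdj

/-- A stable set: pairwise antiadjacent vertices. -/
def IsStableSet (G : Trigraph V) (S : Set V) : Prop := S.Pairwise G.AntiAdj

/-- The neighbourhood of a vertex: the set of vertices adjacent to it. -/
def neighborhood (G : Trigraph V) (v : V) : Set V := {u | G.Adj v u}

/-- Claw-free: no vertex has three pairwise antiadjacent vertices in its neighbourhood. -/
def ClawFree (G : Trigraph V) : Prop :=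
  ¬ ∃ v a b c : V, G.Adj v a ∧ G.Adj v b ∧ G.Adj v c ∧
    G.AntiAdj a b ∧ G.AntiAdj a c ∧ G.AntiAdj b c

/-- Cobipartite: the vertex set is the union of two strong cliques. -/
def Cobipartite (G : Trigraph V) : Prop :=
  ∃ K1 K2 : Set V, G.IsStrongClique K1 ∧ G.IsStrongClique K2 ∧ K1 ∪ K2 = Set.univ

/-- Quasi-line: the neighbourhood of every vertex is the union of two strong cliques. -/
def QuasiLine (G : Trigraph V) : Prop :=
  ∀ v : V, ∃ K1 K2 : Set V, G.IsStrongClique K1 ∧ G.IsStrongClique K2 ∧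
    G.neighborhood v = K1 ∪ K2

/-- Connected: any two vertices are joined by a sequence of consecutively adjacent vertices. -/
def Connected (G : Trigraph V) : Prop :=
  ∀ u v : V, Relation.ReflTransGen G.Adj u v

/-- Non-degenerate: quasi-line and not cobipartite, or claw-free with stability number ≥ 3. -/
def NonDegenerate (G : Trigraph V) : Prop :=
  (G.QuasiLine ∧ ¬ G.Cobipartite) ∨
  (G.ClawFree ∧ ∃ S : Set V, G.IsStableSet S ∧ 3 ≤ S.ncard)

/-- A homogeneous set: `|V| > |X| ≥ 2` and every vertex outside `X` is strongly complete
or strongly anticomplete to `X`. -/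
def HomogeneousSet (G : Trigraph V) (X : Set V) : Prop :=
  2 ≤ X.ncard ∧ X ≠ Set.univ ∧
  ∀ v ∉ X, G.StronglyComplete {v} X ∨ G.StronglyAnticomplete {v} X

/-- `v1 v2 v3 v4` is a square: the pairs `v1v3`, `v2v4` are antiadjacent and the other
four pairs are adjacent. -/
def IsSquare (G : Trigraph V) (v1 v2 v3 v4 : V) : Prop :=
  G.AntiAdj v1 v3 ∧ G.AntiAdj v2 v4 ∧
  G.Adj v1 v2 ∧ G.Adj v2 v3 ∧ G.Adj v3 v4 ∧ G.Adj v4 v1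

/-- `X` contains a square. -/
def HasSquareIn (G : Trigraph V) (X : Set V) : Prop :=
  ∃ v1 v2 v3 v4 : V, G.IsSquare v1 v2 v3 v4 ∧ ({v1, v2, v3, v4} : Set V) ⊆ X

/-- Homogeneous pair of strong cliques `(A, B)`. -/
def HPOSC (G : Trigraph V) (A B : Set V) : Prop :=
  A.Nonempty ∧ B.Nonempty ∧ Disjoint A B ∧
  G.IsStrongClique A ∧ G.IsStrongClique B ∧
  ¬ (∃ a b : V, A = {a} ∧ B = {b}) ∧
  ∀ v ∉ A ∪ B,
    (G.StronglyComplete {v} A ∨ G.StronglyAnticomplete {v} A) ∧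
    (G.StronglyComplete {v} B ∨ G.StronglyAnticomplete {v} B)

/-- Deletion-minimal homogeneous pair of strong cliques. -/
def DeletionMinimal (G : Trigraph V) (A B : Set V) : Prop :=
  G.HPOSC A B ∧ G.HasSquareIn (A ∪ B) ∧
  (∀ a ∈ A, ¬ G.StronglyComplete {a} B ∧ ¬ G.StronglyAnticomplete {a} B) ∧
  (∀ b ∈ B, ¬ G.StronglyComplete {b} A ∧ ¬ G.StronglyAnticomplete {b} A)

/-- There is a square contained in `X` intersecting both `S1` and `S2`. -/
def SquareMeets (G : Trigraph V) (X S1 S2 : Set V) : Prop :=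
  ∃ v1 v2 v3 v4 : V, G.IsSquare v1 v2 v3 v4 ∧ ({v1, v2, v3, v4} : Set V) ⊆ X ∧
    (({v1, v2, v3, v4} : Set V) ∩ S1).Nonempty ∧
    (({v1, v2, v3, v4} : Set V) ∩ S2).Nonempty

/-- Square-connected homogeneous pair of strong cliques. -/
def SquareConnected (G : Trigraph V) (A B : Set V) : Prop :=
  G.HPOSC A B ∧
  (∀ A' A'' : Set V, A'.Nonempty → A''.Nonempty → A' ∪ A'' = A → Disjoint A' A'' →
    G.SquareMeets (A ∪ B) A' A'') ∧
  (∀ B' B'' : Set V, B'.Nonempty → B''.Nonempty → B' ∪ B'' = B → Disjoint B' B'' →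
    G.SquareMeets (A ∪ B) B' B'')

/-- Inclusion-maximal square-connected homogeneous pair of strong cliques. -/
def MaxSquareConnected (G : Trigraph V) (A B : Set V) : Prop :=
  G.SquareConnected A B ∧
  ∀ A' B' : Set V, G.SquareConnected A' B' → A ⊆ A' → B ⊆ B' → A' = A ∧ B' = B

/-- Two homogeneous pairs have skew intersection if a part of one intersects both
parts of the other. -/
def SkewIntersection (A1 B1 A2 B2 : Set V) : Prop :=
  ((A1 ∩ A2).Nonempty ∧ (A1 ∩ B2).Nonempty) ∨
  ((B1 ∩ A2).Nonempty ∧ (B1 ∩ B2).Nonempty) ∨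
  ((A2 ∩ A1).Nonempty ∧ (A2 ∩ B1).Nonempty) ∨
  ((B2 ∩ A1).Nonempty ∧ (B2 ∩ B1).Nonempty)

/-- Laminar: contains no square-connected homogeneous pair of strong cliques. -/
def Laminar (G : Trigraph V) : Prop := ¬ ∃ A B : Set V, G.SquareConnected A B

/-- `G` is a thickening of `G'` via the map `I` (equivalently, `G'` is an antithickening
of `G`): the `I v` are nonempty strong cliques partitioning `V(G)` respecting adjacency. -/
def IsThickening (G : Trigraph V) (G' : Trigraph V') (I : V' → Set V) : Prop :=
  (∀ v : V', (I v).Nonempty ∧ G.IsStrongClique (I v)) ∧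
  (∀ u v : V', u ≠ v → Disjoint (I u) (I v)) ∧
  (⋃ v : V', I v) = Set.univ ∧
  ∀ u v : V', u ≠ v →
    (G'.StrongAdj u v → G.StronglyComplete (I u) (I v)) ∧
    (G'.StrongAntiAdj u v → G.StronglyAnticomplete (I u) (I v)) ∧
    (G'.SemiAdj u v →
      ¬ G.StronglyComplete (I u) (I v) ∧ ¬ G.StronglyAnticomplete (I u) (I v))

/-- `G'` (with thickening map `I`) is an optimal antithickening of `G`: it is a laminar
antithickening with the maximum possible number of vertices. -/
def OptimalAntithickening (G : Trigraph V) (G' : Trigraph V') (I : V' → Set V) : Prop :=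
  G.IsThickening G' I ∧ G'.Laminar ∧
  ∀ (W : Type) (H : Trigraph W) (J : W → Set V),
    G.IsThickening H J → H.Laminar → Nat.card W ≤ Nat.card V'

/-- Isomorphism of trigraphs. -/
def Isomorphic (G1 : Trigraph V) (G2 : Trigraph V') : Prop :=
  ∃ f : V ≃ V', ∀ u v : V, G2.θ (f u) (f v) = G1.θ u v

end Trigraph

/-!
Normalise every square inside `A ∪ B` as `a a' b b'` with `a, a' ∈ A`, `b, b' ∈ B` and
diagonals `ab`, `a'b'`, and call two vertices linked when such a square contains both. Let `C`
be the component of this relation containing a fixed square; then `(A ∩ C, B ∩ C)` works.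

A vertex `v ∈ A \ C` is strongly complete or strongly anticomplete to the `B`-side of every
square of `C` (otherwise `v` would form a square with it), and two squares of `C` sharing a
vertex give the same answer, so by connectivity `v` is homogeneous to `B ∩ C`. If a partition
`A₁ ∪ A₂` of `A ∩ C` were met by no square of `C`, the `A`-side of every square of `C` would lie
in one part; two squares sharing a `B`-vertex with `A`-sides in different parts produce a third
square meeting both parts, so connectivity again gives a contradiction.
-/

section Linked

variable {α : Type*} {𝓑 : Set (Set α)} {x y z : α} {S T : Set α}

def Linked (𝓑 : Set (Set α)) (x y : α) : Prop := ∃ S ∈ 𝓑, x ∈ S ∧ y ∈ S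

def linkComponent (𝓑 : Set (Set α)) (x : α) : Set α :=
  {y | Relation.ReflTransGen (Linked 𝓑) x y}

instance : Std.Symm (Linked 𝓑) where
  symm _ _ := fun ⟨S, hS, hx, hy⟩ => ⟨S, hS, hy, hx⟩

theorem mem_linkComponent_self : x ∈ linkComponent 𝓑 x := Relation.ReflTransGen.refl

theorem subset_linkComponent (hS : S ∈ 𝓑) (hyS : y ∈ S) (hy : y ∈ linkComponent 𝓑 x) :
    S ⊆ linkComponent 𝓑 x :=
  fun _ hz => hy.tail ⟨S, hS, hyS, hz⟩

theorem exists_subset_linkComponent (hS : S ∈ 𝓑) (hxS : x ∈ S) (hy : y ∈ linkComponent 𝓑 x) :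
    ∃ T ∈ 𝓑, y ∈ T ∧ T ⊆ linkComponent 𝓑 x := by
  rcases hy.cases_tail with rfl | ⟨w, hw, T, hT, hwT, hyT⟩
  · exact ⟨S, hS, hxS, subset_linkComponent hS hxS mem_linkComponent_self⟩
  · exact ⟨T, hT, hyT, subset_linkComponent hT hwT hw⟩

theorem iff_of_mem_linkComponent {P : Set α → Prop}
    (hP : ∀ S ∈ 𝓑, ∀ T ∈ 𝓑, S ⊆ linkComponent 𝓑 x → T ⊆ linkComponent 𝓑 x →
      (S ∩ T).Nonempty → P S → P T)
    (hS : S ∈ 𝓑) (hT : T ∈ 𝓑) (hyS : y ∈ S) (hzT : z ∈ T)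
    (hy : y ∈ linkComponent 𝓑 x) (hz : z ∈ linkComponent 𝓑 x) : P S ↔ P T := by
  have hmem : ∀ {w}, Relation.ReflTransGen (Linked 𝓑) y w → w ∈ linkComponent 𝓑 x :=
    fun hw => Relation.ReflTransGen.trans hy hw
  have hchain : ∀ w, Relation.ReflTransGen (Linked 𝓑) y w →
      ∀ U ∈ 𝓑, w ∈ U → (P S ↔ P U) := by
    intro w hw
    induction hw with
    | refl =>
      intro U hU hyU
      have hSC := subset_linkComponent hS hyS hy
      have hUC := subset_linkComponent hU hyU hy
      exact ⟨hP S hS U hU hSC hUC ⟨y, hyS, hyU⟩, hP U hU S hS hUC hSC ⟨y, hyU, hyS⟩⟩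
    | tail hw hlink ih =>
      obtain ⟨W, hW, hwW, hw'W⟩ := hlink
      intro U hU hw'U
      have hWC := subset_linkComponent hW hwW (hmem hw)
      have hUC := subset_linkComponent hU hw'U (hWC hw'W)
      exact (ih W hW hwW).trans
        ⟨hP W hW U hU hWC hUC ⟨_, hw'W, hw'U⟩, hP U hU W hW hUC hWC ⟨_, hw'U, hw'W⟩⟩
  exact hchain z ((symm_of (Relation.ReflTransGen (Linked 𝓑)) hy).trans hz) T hT hzT

end Linked

theorem Set.insert_insert_pair_comm {α : Type*} (a a' b b' : α) :
    ({b, b', a, a'} : Set α) = {a, a', b, b'} := by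
  ext
  simp only [Set.mem_insert_iff, Set.mem_singleton_iff]
  tauto

namespace Trigraph

variable {V : Type} {G : Trigraph V} {A B X Y Z S T S₀ : Set V} {a a' b b' u v x z : V}

theorem stronglyComplete_singleton_iff :
    G.StronglyComplete {v} X ↔ ∀ w ∈ X, G.StrongAdj v w := by
  simp [StronglyComplete]

theorem stronglyAnticomplete_singleton_iff :
    G.StronglyAnticomplete {v} X ↔ ∀ w ∈ X, G.StrongAntiAdj v w := by
  simp [StronglyAnticomplete]

theorem StronglyComplete.mono_right (h : G.StronglyComplete X Y) {Y' : Set V} (hY : Y' ⊆ Y) :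
    G.StronglyComplete X Y' :=
  fun a ha b hb => h a ha b (hY hb)

theorem StronglyAnticomplete.mono_right (h : G.StronglyAnticomplete X Y) {Y' : Set V}
    (hY : Y' ⊆ Y) : G.StronglyAnticomplete X Y' :=
  fun a ha b hb => h a ha b (hY hb)

theorem Adj.symm (h : G.Adj u v) : G.Adj v u := by
  obtain ⟨hne, hθ⟩ := h
  exact ⟨hne.symm, G.symm u v ▸ hθ⟩

theorem AntiAdj.symm (h : G.AntiAdj u v) : G.AntiAdj v u := by
  obtain ⟨hne, hθ⟩ := h
  exact ⟨hne.symm, G.symm u v ▸ hθ⟩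

theorem Adj.theta_nonneg (h : G.Adj u v) : 0 ≤ G.θ u v := by
  rcases h.2 with e | e <;> omega

theorem AntiAdj.theta_nonpos (h : G.AntiAdj u v) : G.θ u v ≤ 0 := by
  rcases h.2 with e | e <;> omega

theorem adj_of_theta_nonneg (hne : u ≠ v) (h : 0 ≤ G.θ u v) : G.Adj u v :=
  ⟨hne, by rcases G.range_mem u v with e | e | e <;> omega⟩

theorem antiAdj_of_theta_nonpos (hne : u ≠ v) (h : G.θ u v ≤ 0) : G.AntiAdj u v :=
  ⟨hne, by rcases G.range_mem u v with e | e | e <;> omega⟩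

theorem IsStrongClique.not_antiAdj (hX : G.IsStrongClique X) (hu : u ∈ X) (hv : v ∈ X) :
    ¬ G.AntiAdj u v := fun h => by
  have : G.θ u v = 1 := hX hu hv h.1
  rcases h.2 with e | e <;> omega

theorem IsSquare.rotate {v₁ v₂ v₃ v₄ : V} (h : G.IsSquare v₁ v₂ v₃ v₄) :
    G.IsSquare v₃ v₄ v₁ v₂ :=
  let ⟨h13, h24, h12, h23, h34, h41⟩ := h
  ⟨h13.symm, h24.symm, h34, h41, h12, h23⟩

theorem IsSquare.reverse {v₁ v₂ v₃ v₄ : V} (h : G.IsSquare v₁ v₂ v₃ v₄) :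
    G.IsSquare v₁ v₄ v₃ v₂ :=
  let ⟨h13, h24, h12, h23, h34, h41⟩ := h
  ⟨h13, h24.symm, h41.symm, h34.symm, h23.symm, h12.symm⟩

variable (G) in
/-- A square `a a' b b'` with diagonals `ab`, `a'b'`, recorded through `θ`: for distinct
vertices, `θ ≤ 0` is antiadjacency and `0 ≤ θ` adjacency. -/
structure IsCrossSquare (A B : Set V) (a a' b b' : V) : Prop where
  left_mem : a ∈ A
  left_mem' : a' ∈ A
  right_mem : b ∈ B
  right_mem' : b' ∈ B
  left_ne : a ≠ a'
  right_ne : b ≠ b'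
  diag : G.θ a b ≤ 0
  diag' : G.θ a' b' ≤ 0
  side : 0 ≤ G.θ a' b
  side' : 0 ≤ G.θ a b'

variable (G) in
def crossSquares (A B : Set V) : Set (Set V) :=
  {S | ∃ a a' b b', G.IsCrossSquare A B a a' b b' ∧ S = {a, a', b, b'}}

variable (G) in
def squareComponent (A B : Set V) (x : V) : Set V := linkComponent (G.crossSquares A B) x

theorem IsCrossSquare.swap (h : G.IsCrossSquare A B a a' b b') :
    G.IsCrossSquare A B a' a b' b :=
  ⟨h.left_mem', h.left_mem, h.right_mem', h.right_mem, h.left_ne.symm, h.right_ne.symm,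
    h.diag', h.diag, h.side', h.side⟩

theorem IsCrossSquare.flip (h : G.IsCrossSquare A B a a' b b') :
    G.IsCrossSquare B A b b' a a' :=
  ⟨h.right_mem, h.right_mem', h.left_mem, h.left_mem', h.right_ne, h.left_ne,
    G.symm a b ▸ h.diag, G.symm a' b' ▸ h.diag', G.symm a b' ▸ h.side', G.symm a' b ▸ h.side⟩

theorem IsCrossSquare.mem_crossSquares (h : G.IsCrossSquare A B a a' b b') :
    {a, a', b, b'} ∈ G.crossSquares A B :=
  ⟨a, a', b, b', h, rfl⟩

theorem IsCrossSquare.isSquare (hA : G.IsStrongClique A) (hB : G.IsStrongClique B)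
    (hAB : Disjoint A B) (h : G.IsCrossSquare A B a a' b b') : G.IsSquare a a' b b' := by
  have hne : ∀ {p q}, p ∈ A → q ∈ B → p ≠ q := fun hp hq e =>
    Set.disjoint_left.mp hAB hp (e ▸ hq)
  exact ⟨antiAdj_of_theta_nonpos (hne h.left_mem h.right_mem) h.diag,
    antiAdj_of_theta_nonpos (hne h.left_mem' h.right_mem') h.diag',
    ⟨h.left_ne, Or.inl (hA h.left_mem h.left_mem' h.left_ne)⟩,
    adj_of_theta_nonneg (hne h.left_mem' h.right_mem) h.side,
    ⟨h.right_ne, Or.inl (hB h.right_mem h.right_mem' h.right_ne)⟩,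
    (adj_of_theta_nonneg (hne h.left_mem h.right_mem') h.side').symm⟩

theorem IsCrossSquare.left_inter (hAB : Disjoint A B) (h : G.IsCrossSquare A B a a' b b') :
    A ∩ {a, a', b, b'} = {a, a'} := by
  have hb : b ∉ A := Set.disjoint_right.mp hAB h.right_mem
  have hb' : b' ∉ A := Set.disjoint_right.mp hAB h.right_mem'
  ext z
  simp only [Set.mem_inter_iff, Set.mem_insert_iff, Set.mem_singleton_iff]
  constructor
  · rintro ⟨hz, rfl | rfl | rfl | rfl⟩ <;> simp_all
  · rintro (rfl | rfl)
    exacts [⟨h.left_mem, by simp⟩, ⟨h.left_mem', by simp⟩]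

theorem IsCrossSquare.right_inter (hAB : Disjoint A B) (h : G.IsCrossSquare A B a a' b b') :
    B ∩ {a, a', b, b'} = {b, b'} := by
  rw [Set.insert_insert_pair_comm .., h.flip.left_inter hAB.symm]

theorem IsSquare.isCrossSquare (h : G.IsSquare a a' b b') (ha : a ∈ A) (ha' : a' ∈ A)
    (hb : b ∈ B) (hb' : b' ∈ B) : G.IsCrossSquare A B a a' b b' := by
  obtain ⟨hab, ha'b', haa', ha'b, hbb', hb'a⟩ := h
  exact ⟨ha, ha', hb, hb', haa'.1, hbb'.1, hab.theta_nonpos, ha'b'.theta_nonpos,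
    ha'b.theta_nonneg, hb'a.symm.theta_nonneg⟩

theorem exists_isCrossSquare_of_hasSquareIn (hA : G.IsStrongClique A)
    (hB : G.IsStrongClique B) (h : G.HasSquareIn (A ∪ B)) :
    ∃ a a' b b', G.IsCrossSquare A B a a' b b' := by
  have key : ∀ {w₁ w₂ w₃ w₄}, G.IsSquare w₁ w₂ w₃ w₄ → w₁ ∈ A → w₂ ∈ A ∪ B →
      w₃ ∈ A ∪ B → w₄ ∈ A ∪ B → ∃ a a' b b', G.IsCrossSquare A B a a' b b' := by
    intro w₁ w₂ w₃ w₄ hw h₁ h₂ h₃ h₄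
    have h₃B : w₃ ∈ B := h₃.resolve_left fun h₃A => hA.not_antiAdj h₁ h₃A hw.1
    rcases h₂ with h₂A | h₂B
    · have h₄B : w₄ ∈ B := h₄.resolve_left fun h₄A => hA.not_antiAdj h₂A h₄A hw.2.1
      exact ⟨_, _, _, _, hw.isCrossSquare h₁ h₂A h₃B h₄B⟩
    · have h₄A : w₄ ∈ A := h₄.resolve_right fun h₄B => hB.not_antiAdj h₂B h₄B hw.2.1
      exact ⟨_, _, _, _, hw.reverse.isCrossSquare h₁ h₄A h₃B h₂B⟩
  obtain ⟨v₁, v₂, v₃, v₄, hsq, hsub⟩ := h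
  rcases hsub (by simp : v₁ ∈ _) with h₁A | h₁B
  · exact key hsq h₁A (hsub (by simp)) (hsub (by simp)) (hsub (by simp))
  · have h₃A : v₃ ∈ A :=
      (hsub (by simp : v₃ ∈ _)).resolve_right fun h₃B => hB.not_antiAdj h₁B h₃B hsq.1
    exact key hsq.rotate h₃A (hsub (by simp)) (hsub (by simp)) (hsub (by simp))

theorem crossSquares_comm : G.crossSquares B A = G.crossSquares A B := by
  have hsub : ∀ {A B : Set V}, G.crossSquares B A ⊆ G.crossSquares A B := by
    rintro A B _ ⟨b, b', a, a', h, rfl⟩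
    exact ⟨a, a', b, b', h.flip, Set.insert_insert_pair_comm ..⟩
  exact hsub.antisymm hsub

theorem squareComponent_comm : G.squareComponent B A x = G.squareComponent A B x := by
  rw [squareComponent, squareComponent, crossSquares_comm]

theorem subset_union_of_mem_crossSquares (hS : S ∈ G.crossSquares A B) : S ⊆ A ∪ B := by
  obtain ⟨a, a', b, b', h, rfl⟩ := hS
  simp only [Set.insert_subset_iff, Set.singleton_subset_iff, Set.mem_union]
  exact ⟨.inl h.left_mem, .inl h.left_mem', .inr h.right_mem, .inr h.right_mem'⟩

theorem exists_isCrossSquare_left_eq (hAB : Disjoint A B) (hS : S ∈ G.crossSquares A B)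
    (hzS : z ∈ S) (hzA : z ∈ A) :
    ∃ a' b b', G.IsCrossSquare A B z a' b b' ∧ S = {z, a', b, b'} := by
  obtain ⟨a, a', b, b', h, rfl⟩ := hS
  have hz : z ∈ A ∩ {a, a', b, b'} := ⟨hzA, hzS⟩
  rw [h.left_inter hAB] at hz
  rcases hz with rfl | rfl
  · exact ⟨a', b, b', h, rfl⟩
  · exact ⟨a, b', b, h.swap, by rw [Set.insert_comm a, Set.pair_comm]⟩

theorem exists_isCrossSquare_right_eq (hAB : Disjoint A B) (hS : S ∈ G.crossSquares A B)
    (hzS : z ∈ S) (hzB : z ∈ B) :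
    ∃ a a' b', G.IsCrossSquare A B a a' z b' ∧ S = {a, a', z, b'} := by
  rw [← crossSquares_comm] at hS
  obtain ⟨b', a, a', h, rfl⟩ := exists_isCrossSquare_left_eq hAB.symm hS hzS hzB
  exact ⟨a, a', b', h.flip, Set.insert_insert_pair_comm ..⟩

theorem stronglyComplete_or_stronglyAnticomplete_inter (hAB : Disjoint A B)
    (hS : S ∈ G.crossSquares A B) (hSC : S ⊆ G.squareComponent A B x) (hvA : v ∈ A)
    (hvC : v ∉ G.squareComponent A B x) :
    G.StronglyComplete {v} (B ∩ S) ∨ G.StronglyAnticomplete {v} (B ∩ S) := by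
  obtain ⟨p, p', s, t, h, rfl⟩ := hS
  have hjoin : ∀ {q q' r : V}, G.IsCrossSquare A B q q' s r → v ∈ ({q, q', s, r} : Set V) →
      False := fun h' hv =>
    hvC (subset_linkComponent (y := s) h'.mem_crossSquares (by simp) (hSC (by simp)) hv)
  have hvp : v ≠ p := fun e => hvC (e ▸ hSC (by simp))
  have hvp' : v ≠ p' := fun e => hvC (e ▸ hSC (by simp))
  have h₁ : ¬ (G.θ v s ≤ 0 ∧ 0 ≤ G.θ v t) := fun ⟨hs, ht⟩ =>
    hjoin ⟨hvA, h.left_mem', h.right_mem, h.right_mem', hvp', h.right_ne, hs, h.diag', h.side, ht⟩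
      (by simp)
  have h₂ : ¬ (G.θ v t ≤ 0 ∧ 0 ≤ G.θ v s) := fun ⟨ht, hs⟩ =>
    hjoin ⟨h.left_mem, hvA, h.right_mem, h.right_mem', hvp.symm, h.right_ne, h.diag, ht, hs,
      h.side'⟩ (by simp)
  rw [h.right_inter hAB, stronglyComplete_singleton_iff, stronglyAnticomplete_singleton_iff]
  simp only [Set.mem_insert_iff, Set.mem_singleton_iff, forall_eq_or_imp, forall_eq,
    StrongAdj, StrongAntiAdj]
  rcases G.range_mem v s with e | e | e <;> rcases G.range_mem v t with f | f | f <;> omega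

theorem stronglyComplete_inter_of_inter_nonempty (hAB : Disjoint A B)
    (hS : S ∈ G.crossSquares A B) (hT : T ∈ G.crossSquares A B)
    (hSC : S ⊆ G.squareComponent A B x) (hTC : T ⊆ G.squareComponent A B x)
    (hST : (S ∩ T).Nonempty) (hvA : v ∈ A) (hvC : v ∉ G.squareComponent A B x)
    (hvS : G.StronglyComplete {v} (B ∩ S)) : G.StronglyComplete {v} (B ∩ T) := by
  refine (stronglyComplete_or_stronglyAnticomplete_inter hAB hT hTC hvA hvC).resolve_right ?_
  intro hvT
  rw [stronglyComplete_singleton_iff] at hvS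
  rw [stronglyAnticomplete_singleton_iff] at hvT
  obtain ⟨z, hzS, hzT⟩ := hST
  rcases subset_union_of_mem_crossSquares hS hzS with hzA | hzB
  · obtain ⟨p', s, t, hS', rfl⟩ := exists_isCrossSquare_left_eq hAB hS hzS hzA
    obtain ⟨q', u, w, hT', rfl⟩ := exists_isCrossSquare_left_eq hAB hT hzT hzA
    have hvs : G.θ v s = 1 := hvS s ⟨hS'.right_mem, by simp⟩
    have hvw : G.θ v w = -1 := hvT w ⟨hT'.right_mem', by simp⟩
    -- then `v z w s` is a cross square through `z`, which would put `v` into the component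
    have hnew : G.IsCrossSquare A B v z w s :=
      ⟨hvA, hzA, hT'.right_mem', hS'.right_mem, fun e => hvC (e ▸ hSC hzS),
        fun e => by rw [e] at hvw; omega, by omega, hS'.diag, hT'.side', by omega⟩
    exact hvC (subset_linkComponent hnew.mem_crossSquares (by simp) (hSC hzS) (by simp))
  · have h₁ : G.θ v z = 1 := hvS z ⟨hzB, hzS⟩
    have h₂ : G.θ v z = -1 := hvT z ⟨hzB, hzT⟩
    omega

theorem stronglyComplete_or_stronglyAnticomplete_inter_squareComponent (hAB : Disjoint A B)
    (hS₀ : S₀ ∈ G.crossSquares A B) (hx : x ∈ S₀) (hvA : v ∈ A)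
    (hvC : v ∉ G.squareComponent A B x) :
    G.StronglyComplete {v} (B ∩ G.squareComponent A B x) ∨
      G.StronglyAnticomplete {v} (B ∩ G.squareComponent A B x) := by
  have hiff : ∀ T ∈ G.crossSquares A B, T ⊆ G.squareComponent A B x → ∀ y ∈ T,
      (G.StronglyComplete {v} (B ∩ S₀) ↔ G.StronglyComplete {v} (B ∩ T)) :=
    fun T hT hTC y hyT =>
      iff_of_mem_linkComponent (P := fun S ↦ G.StronglyComplete {v} (B ∩ S))
      (fun S hS T hT hSC hTC hST =>
        stronglyComplete_inter_of_inter_nonempty hAB hS hT hSC hTC hST hvA hvC)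
      hS₀ hT hx hyT mem_linkComponent_self (hTC hyT)
  rw [stronglyComplete_singleton_iff, stronglyAnticomplete_singleton_iff]
  by_cases h₀ : G.StronglyComplete {v} (B ∩ S₀)
  · refine .inl fun b ⟨hbB, hbC⟩ => ?_
    obtain ⟨T, hT, hbT, hTC⟩ := exists_subset_linkComponent hS₀ hx hbC
    exact stronglyComplete_singleton_iff.1 ((hiff T hT hTC b hbT).1 h₀) b ⟨hbB, hbT⟩
  · refine .inr fun b ⟨hbB, hbC⟩ => ?_
    obtain ⟨T, hT, hbT, hTC⟩ := exists_subset_linkComponent hS₀ hx hbC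
    have hvT := (stronglyComplete_or_stronglyAnticomplete_inter hAB hT hTC hvA hvC).resolve_left
      (fun hvT => h₀ ((hiff T hT hTC b hbT).2 hvT))
    exact stronglyAnticomplete_singleton_iff.1 hvT b ⟨hbB, hbT⟩

/-- Depending on the signs of `θ q t` and `θ p w`, one of `p' q t s`, `p q' s w`, `p q w t`
is a cross square. -/
theorem exists_crossSquare_meets_of_right_eq {p p' q q' s t w : V}
    (h₁ : G.IsCrossSquare A B p p' s t) (h₂ : G.IsCrossSquare A B q q' s w)
    (hXY : Disjoint X Y) (hp : p ∈ X) (hp' : p' ∈ X) (hq : q ∈ Y) (hq' : q' ∈ Y) :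
    ∃ S ∈ G.crossSquares A B, S ⊆ {p, p', s, t} ∪ {q, q', s, w} ∧
      (S ∩ X).Nonempty ∧ (S ∩ Y).Nonempty := by
  have hne : ∀ {c d}, c ∈ X → d ∈ Y → c ≠ d := fun hc hd e =>
    Set.disjoint_left.mp hXY hc (e ▸ hd)
  rcases le_or_gt 0 (G.θ q t) with hqt | hqt
  · have h : G.IsCrossSquare A B p' q t s := ⟨h₁.left_mem', h₂.left_mem, h₁.right_mem',
      h₁.right_mem, hne hp' hq, h₁.right_ne.symm, h₁.diag', h₂.diag, hqt, h₁.side⟩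
    exact ⟨_, h.mem_crossSquares, by simp [Set.insert_subset_iff], ⟨p', by simp, hp'⟩,
      ⟨q, by simp, hq⟩⟩
  rcases le_or_gt 0 (G.θ p w) with hpw | hpw
  · have h : G.IsCrossSquare A B p q' s w := ⟨h₁.left_mem, h₂.left_mem', h₁.right_mem,
      h₂.right_mem', hne hp hq', h₂.right_ne, h₁.diag, h₂.diag', h₂.side, hpw⟩
    exact ⟨_, h.mem_crossSquares, by simp [Set.insert_subset_iff], ⟨p, by simp, hp⟩,
      ⟨q', by simp, hq'⟩⟩
  · have h : G.IsCrossSquare A B p q w t := ⟨h₁.left_mem, h₂.left_mem, h₂.right_mem',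
      h₁.right_mem', hne hp hq, fun e => by rw [e] at h₂; linarith [h₂.side'], hpw.le,
      hqt.le, h₂.side', h₁.side'⟩
    exact ⟨_, h.mem_crossSquares, by simp [Set.insert_subset_iff], ⟨p, by simp, hp⟩,
      ⟨q, by simp, hq⟩⟩

theorem exists_crossSquare_meets_of_partition (hAB : Disjoint A B)
    (hS₀ : S₀ ∈ G.crossSquares A B) (hx : x ∈ S₀) {A₁ A₂ : Set V} (h₁ : A₁.Nonempty)
    (h₂ : A₂.Nonempty) (hA₁₂ : A₁ ∪ A₂ = A ∩ G.squareComponent A B x) (hd : Disjoint A₁ A₂) :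
    ∃ S ∈ G.crossSquares A B, S ⊆ G.squareComponent A B x ∧
      (S ∩ A₁).Nonempty ∧ (S ∩ A₂).Nonempty := by
  set C := G.squareComponent A B x
  by_contra hmeet
  have hno : ∀ S ∈ G.crossSquares A B, S ⊆ C → (S ∩ A₁).Nonempty → (S ∩ A₂).Nonempty →
      False := fun S hS hSC hS₁ hS₂ => hmeet ⟨S, hS, hSC, hS₁, hS₂⟩
  have hside : ∀ {a}, a ∈ A → a ∈ C → a ∈ A₁ ∨ a ∈ A₂ := fun ha hc =>
    (hA₁₂.symm ▸ ⟨ha, hc⟩ : _ ∈ A₁ ∪ A₂)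
  have hinv : ∀ S ∈ G.crossSquares A B, ∀ T ∈ G.crossSquares A B, S ⊆ C → T ⊆ C →
      (S ∩ T).Nonempty → (S ∩ A₁).Nonempty → (T ∩ A₁).Nonempty := by
    rintro S hS T hT hSC hTC ⟨z, hzS, hzT⟩ hS₁
    by_contra hT₁
    rcases subset_union_of_mem_crossSquares hS hzS with hzA | hzB
    · rcases hside hzA (hSC hzS) with hz | hz
      exacts [hT₁ ⟨z, hzT, hz⟩, hno S hS hSC hS₁ ⟨z, hzS, hz⟩]
    · obtain ⟨p, p', t, hS', rfl⟩ := exists_isCrossSquare_right_eq hAB hS hzS hzB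
      obtain ⟨q, q', w, hT', rfl⟩ := exists_isCrossSquare_right_eq hAB hT hzT hzB
      have hX : ∀ {a}, a ∈ A → a ∈ ({p, p', z, t} : Set V) → a ∈ A₁ := fun ha haS =>
        (hside ha (hSC haS)).resolve_right fun h => hno _ hS hSC hS₁ ⟨_, haS, h⟩
      have hY : ∀ {a}, a ∈ A → a ∈ ({q, q', z, w} : Set V) → a ∈ A₂ := fun ha haT =>
        (hside ha (hTC haT)).resolve_left fun h => hT₁ ⟨_, haT, h⟩
      obtain ⟨S', hS', hS'sub, hS'₁, hS'₂⟩ := exists_crossSquare_meets_of_right_eq hS' hT' hd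
        (hX hS'.left_mem (by simp)) (hX hS'.left_mem' (by simp))
        (hY hT'.left_mem (by simp)) (hY hT'.left_mem' (by simp))
      exact hno S' hS' (hS'sub.trans (Set.union_subset hSC hTC)) hS'₁ hS'₂
  obtain ⟨a₁, ha₁⟩ := h₁
  obtain ⟨a₂, ha₂⟩ := h₂
  have ha₁C : a₁ ∈ C := (hA₁₂ ▸ Or.inl ha₁ : a₁ ∈ A ∩ C).2
  have ha₂C : a₂ ∈ C := (hA₁₂ ▸ Or.inr ha₂ : a₂ ∈ A ∩ C).2
  obtain ⟨T₁, hT₁, ha₁T, hT₁C⟩ := exists_subset_linkComponent hS₀ hx ha₁C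
  obtain ⟨T₂, hT₂, ha₂T, hT₂C⟩ := exists_subset_linkComponent hS₀ hx ha₂C
  have hT₂₁ : (T₂ ∩ A₁).Nonempty :=
    (iff_of_mem_linkComponent hinv hT₁ hT₂ ha₁T ha₂T ha₁C ha₂C).1 ⟨a₁, ha₁T, ha₁⟩
  exact hno T₂ hT₂ hT₂C hT₂₁ ⟨a₂, ha₂T, ha₂⟩

theorem squareMeets_of_mem_crossSquares (hA : G.IsStrongClique A) (hB : G.IsStrongClique B)
    (hAB : Disjoint A B) (hS : S ∈ G.crossSquares A B) (hSX : S ⊆ X)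
    (hY : (S ∩ Y).Nonempty) (hZ : (S ∩ Z).Nonempty) : G.SquareMeets X Y Z := by
  obtain ⟨a, a', b, b', h, rfl⟩ := hS
  exact ⟨a, a', b, b', h.isSquare hA hB hAB, hSX, hY, hZ⟩

theorem homogeneous_inter_squareComponent_of_mem_left (hA : G.IsStrongClique A)
    (hAB : Disjoint A B) (hS₀ : S₀ ∈ G.crossSquares A B) (hx : x ∈ S₀)
    (hvA : v ∈ A) (hvC : v ∉ G.squareComponent A B x) :
    (G.StronglyComplete {v} (A ∩ G.squareComponent A B x) ∨
        G.StronglyAnticomplete {v} (A ∩ G.squareComponent A B x)) ∧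
      (G.StronglyComplete {v} (B ∩ G.squareComponent A B x) ∨
        G.StronglyAnticomplete {v} (B ∩ G.squareComponent A B x)) :=
  ⟨.inl <| stronglyComplete_singleton_iff.2 fun _ hc => hA hvA hc.1 fun e => hvC (e ▸ hc.2),
    stronglyComplete_or_stronglyAnticomplete_inter_squareComponent hAB hS₀ hx hvA hvC⟩

theorem hposc_inter_squareComponent (hA : G.IsStrongClique A) (hB : G.IsStrongClique B)
    (hAB : Disjoint A B)
    (hhom : ∀ v ∉ A ∪ B,
      (G.StronglyComplete {v} A ∨ G.StronglyAnticomplete {v} A) ∧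
      (G.StronglyComplete {v} B ∨ G.StronglyAnticomplete {v} B))
    (h : G.IsCrossSquare A B a a' b b') :
    G.HPOSC (A ∩ G.squareComponent A B a) (B ∩ G.squareComponent A B a) := by
  set C := G.squareComponent A B a
  have hC : {a, a', b, b'} ⊆ C :=
    subset_linkComponent h.mem_crossSquares (by simp) mem_linkComponent_self
  refine ⟨⟨a, h.left_mem, hC (by simp)⟩, ⟨b, h.right_mem, hC (by simp)⟩,
    hAB.mono Set.inter_subset_left Set.inter_subset_left, hA.mono Set.inter_subset_left,
    hB.mono Set.inter_subset_left, ?_, fun v hv => ?_⟩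
  · rintro ⟨c, -, hAC, -⟩
    have ha : a ∈ A ∩ C := ⟨h.left_mem, hC (by simp)⟩
    have ha' : a' ∈ A ∩ C := ⟨h.left_mem', hC (by simp)⟩
    rw [hAC] at ha ha'
    exact h.left_ne (ha.trans ha'.symm)
  by_cases hvA : v ∈ A
  · exact homogeneous_inter_squareComponent_of_mem_left hA hAB h.mem_crossSquares (by simp)
      hvA fun hvC => hv (.inl ⟨hvA, hvC⟩)
  by_cases hvB : v ∈ B
  · have hS₀ : {a, a', b, b'} ∈ G.crossSquares B A := by
      rw [crossSquares_comm]
      exact h.mem_crossSquares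
    have hvC : v ∉ G.squareComponent B A a := by
      rw [squareComponent_comm]
      exact fun hvC => hv (.inr ⟨hvB, hvC⟩)
    have := homogeneous_inter_squareComponent_of_mem_left hB hAB.symm hS₀ (by simp) hvB hvC
    rw [squareComponent_comm] at this
    exact this.symm
  obtain ⟨hvA', hvB'⟩ := hhom v fun h => h.elim hvA hvB
  exact ⟨hvA'.imp (·.mono_right Set.inter_subset_left) (·.mono_right Set.inter_subset_left),
    hvB'.imp (·.mono_right Set.inter_subset_left) (·.mono_right Set.inter_subset_left)⟩

theorem squareConnected_inter_squareComponent (hA : G.IsStrongClique A)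
    (hB : G.IsStrongClique B) (hAB : Disjoint A B)
    (hhom : ∀ v ∉ A ∪ B,
      (G.StronglyComplete {v} A ∨ G.StronglyAnticomplete {v} A) ∧
      (G.StronglyComplete {v} B ∨ G.StronglyAnticomplete {v} B))
    (h : G.IsCrossSquare A B a a' b b') :
    G.SquareConnected (A ∩ G.squareComponent A B a) (B ∩ G.squareComponent A B a) := by
  set C := G.squareComponent A B a
  have hsub : ∀ S ∈ G.crossSquares A B, S ⊆ C → S ⊆ A ∩ C ∪ B ∩ C := fun S hS hSC =>
    Set.union_inter_distrib_right A B C ▸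
      Set.subset_inter (subset_union_of_mem_crossSquares hS) hSC
  refine ⟨hposc_inter_squareComponent hA hB hAB hhom h, fun A₁ A₂ h₁ h₂ hA₁₂ hd => ?_,
    fun B₁ B₂ h₁ h₂ hB₁₂ hd => ?_⟩
  · obtain ⟨S, hS, hSC, hS₁, hS₂⟩ := exists_crossSquare_meets_of_partition hAB
      h.mem_crossSquares (by simp) h₁ h₂ hA₁₂ hd
    exact squareMeets_of_mem_crossSquares hA hB hAB hS (hsub S hS hSC) hS₁ hS₂
  · have hS₀ : {a, a', b, b'} ∈ G.crossSquares B A := by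
      rw [crossSquares_comm]
      exact h.mem_crossSquares
    have hB₁₂' : B₁ ∪ B₂ = B ∩ G.squareComponent B A a := by rwa [squareComponent_comm]
    obtain ⟨S, hS, hSC, hS₁, hS₂⟩ := exists_crossSquare_meets_of_partition hAB.symm hS₀
      (by simp) h₁ h₂ hB₁₂' hd
    rw [crossSquares_comm] at hS
    rw [squareComponent_comm] at hSC
    exact squareMeets_of_mem_crossSquares hA hB hAB hS (hsub S hS hSC) hS₁ hS₂

end Trigraph

theorem deletionMinimal_contains_squareConnected_general {V : Type} (G : Trigraph V)
    (A B : Set V) (h : G.DeletionMinimal A B) :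
    ∃ A' B' : Set V, G.SquareConnected A' B' ∧ A' ⊆ A ∧ B' ⊆ B := by
  obtain ⟨⟨-, -, hAB, hA, hB, -, hhom⟩, hsq, -⟩ := h
  obtain ⟨a, a', b, b', hcross⟩ := G.exists_isCrossSquare_of_hasSquareIn hA hB hsq
  exact ⟨_, _, G.squareConnected_inter_squareComponent hA hB hAB hhom hcross,
    Set.inter_subset_left, Set.inter_subset_left⟩

/-- Every deletion-minimal homogeneous pair of strong cliques contains a
square-connected homogeneous pair of strong cliques. -/
theorem deletionMinimal_contains_squareConnected {V : Type} [Fintype V] (G : Trigraph V)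
    (A B : Set V) (h : G.DeletionMinimal A B) :
    ∃ A' B' : Set V, G.SquareConnected A' B' ∧ A' ⊆ A ∧ B' ⊆ B :=
  deletionMinimal_contains_squareConnected_general G A B h
end

section
/- Let G be a connected non-degenerate trigraph containing two square-connected homogeneous pairs of strong cliques (A1, B1) and (A2, B2) without skew intersection, with A1 ∩ A2 ≠ ∅ and B1 ∩ B2 ≠ ∅, and let G' be an optimal antithickening of G with thickening map I. Then there exist semiadjacent vertices a, b of G' such that A1 ∪ A2 ⊆ I(a) and B1 ∪ B2 ⊆ I(b). -/
namespace Trigraph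

variable {V V' : Type}

/-! ### Basic helpers -/

lemma antiAdj_symm {G : Trigraph V} {u v : V} (h : G.AntiAdj u v) : G.AntiAdj v u :=
  ⟨h.1.symm, by rw [G.symm v u]; exact h.2⟩

lemma clique_eq {G : Trigraph V} {K : Set V} (h : G.IsStrongClique K) {u v : V}
    (hu : u ∈ K) (hv : v ∈ K) (hne : u ≠ v) : G.θ u v = 1 := h hu hv hne

lemma ne_of_AB {A B : Set V} (hd : Disjoint A B) {a b : V} (ha : a ∈ A) (hb : b ∈ B) :
    a ≠ b := fun e => Set.disjoint_left.1 hd ha (e ▸ hb)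

lemma homog_A {G : Trigraph V} {A B : Set V} (hsc : G.SquareConnected A B) {v : V}
    (hv : v ∉ A ∪ B) : (∀ w ∈ A, G.θ v w = 1) ∨ (∀ w ∈ A, G.θ v w = -1) := by
  rcases (hsc.1.2.2.2.2.2.2 v hv).1 with h | h
  · exact Or.inl (fun w hw => h v rfl w hw)
  · exact Or.inr (fun w hw => h v rfl w hw)

lemma homog_B {G : Trigraph V} {A B : Set V} (hsc : G.SquareConnected A B) {v : V}
    (hv : v ∉ A ∪ B) : (∀ w ∈ B, G.θ v w = 1) ∨ (∀ w ∈ B, G.θ v w = -1) := by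
  rcases (hsc.1.2.2.2.2.2.2 v hv).2 with h | h
  · exact Or.inl (fun w hw => h v rfl w hw)
  · exact Or.inr (fun w hw => h v rfl w hw)

/-! ### Symmetry of square-connectedness -/

lemma HPOSC.symm {G : Trigraph V} {A B : Set V} (h : G.HPOSC A B) : G.HPOSC B A := by
  obtain ⟨h1, h2, h3, h4, h5, h6, h7⟩ := h
  refine ⟨h2, h1, h3.symm, h5, h4, ?_, ?_⟩
  · rintro ⟨b, a, hB, hA⟩; exact h6 ⟨a, b, hA, hB⟩
  · intro v hv
    have hv' : v ∉ A ∪ B := by rw [Set.union_comm]; exact hv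
    exact (h7 v hv').symm

lemma SquareMeets.comm {G : Trigraph V} {A B S1 S2 : Set V}
    (h : G.SquareMeets (A ∪ B) S1 S2) : G.SquareMeets (B ∪ A) S1 S2 := by
  rwa [Set.union_comm] at h

lemma SquareConnected.symm {G : Trigraph V} {A B : Set V} (h : G.SquareConnected A B) :
    G.SquareConnected B A :=
  ⟨h.1.symm, fun B' B'' h1 h2 h3 h4 => (h.2.2 B' B'' h1 h2 h3 h4).comm,
    fun A' A'' h1 h2 h3 h4 => (h.2.1 A' A'' h1 h2 h3 h4).comm⟩

/-! ### Crosses -/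

/-- A *cross* for the pair `(A, B)`: two vertices in `A`, two in `B`, forming a square. -/
structure Cross (G : Trigraph V) (A B : Set V) (p q c d : V) : Prop where
  hp : p ∈ A
  hq : q ∈ A
  hc : c ∈ B
  hd : d ∈ B
  hpq' : p ≠ q
  hcd' : c ≠ d
  hpq : G.θ p q = 1
  hcd : G.θ c d = 1
  hpc : G.θ p c ≠ 1
  hqd : G.θ q d ≠ 1
  hpd : G.θ p d ≠ -1
  hqc : G.θ q c ≠ -1

lemma Cross.swap {G : Trigraph V} {A B : Set V} {p q c d : V}
    (h : G.Cross A B p q c d) : G.Cross A B q p d c where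
  hp := h.hq
  hq := h.hp
  hc := h.hd
  hd := h.hc
  hpq' := h.hpq'.symm
  hcd' := h.hcd'.symm
  hpq := by rw [G.symm q p]; exact h.hpq
  hcd := by rw [G.symm d c]; exact h.hcd
  hpc := h.hqd
  hqd := h.hpc
  hpd := h.hqc
  hqc := h.hpd

lemma Cross.flip {G : Trigraph V} {A B : Set V} {p q c d : V}
    (h : G.Cross A B p q c d) : G.Cross B A c d p q where
  hp := h.hc
  hq := h.hd
  hc := h.hp
  hd := h.hq
  hpq' := h.hcd'
  hcd' := h.hpq'
  hpq := h.hcd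
  hcd := h.hpq
  hpc := by rw [G.symm c p]; exact h.hpc
  hqd := by rw [G.symm d q]; exact h.hqd
  hpd := by rw [G.symm c q]; exact h.hqc
  hqc := by rw [G.symm d p]; exact h.hpd

lemma IsSquare.rot {G : Trigraph V} {v1 v2 v3 v4 : V} (h : G.IsSquare v1 v2 v3 v4) :
    G.IsSquare v2 v3 v4 v1 := by
  obtain ⟨h13, h24, h12, h23, h34, h41⟩ := h
  exact ⟨h24, antiAdj_symm h13, h23, h34, h41, h12⟩

lemma cross_of_square_aux {G : Trigraph V} {A B : Set V}
    (hA : G.IsStrongClique A) (hB : G.IsStrongClique B) {v1 v2 v3 v4 : V}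
    (h : G.IsSquare v1 v2 v3 v4) (h1 : v1 ∈ A) (h2 : v2 ∈ A) (h3 : v3 ∈ B) (h4 : v4 ∈ B) :
    G.Cross A B v1 v2 v3 v4 := by
  obtain ⟨h13, h24, h12, h23, h34, h41⟩ := h
  refine ⟨h1, h2, h3, h4, h12.1, h34.1, clique_eq hA h1 h2 h12.1, clique_eq hB h3 h4 h34.1,
    ?_, ?_, ?_, ?_⟩
  · rcases h13.2 with e | e <;> omega
  · rcases h24.2 with e | e <;> omega
  · have := h41.2; rw [G.symm v4 v1] at this; rcases this with e | e <;> omega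
  · rcases h23.2 with e | e <;> omega

lemma cross_of_square {G : Trigraph V} {A B : Set V}
    (hA : G.IsStrongClique A) (hB : G.IsStrongClique B) {v1 v2 v3 v4 : V}
    (h : G.IsSquare v1 v2 v3 v4) (hsub : ({v1, v2, v3, v4} : Set V) ⊆ A ∪ B) :
    ∃ p q c d, G.Cross A B p q c d ∧ ({v1, v2, v3, v4} : Set V) = {p, q, c, d} := by
  have hv1 : v1 ∈ A ∪ B := hsub (by simp)
  have hv2 : v2 ∈ A ∪ B := hsub (by simp)
  have hv3 : v3 ∈ A ∪ B := hsub (by simp)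
  have hv4 : v4 ∈ A ∪ B := hsub (by simp)
  have notAA : ∀ x y : V, G.AntiAdj x y → x ∈ A → y ∈ A → False := by
    intro x y hxy hx hy
    have := clique_eq hA hx hy hxy.1
    rcases hxy.2 with e | e <;> omega
  have notBB : ∀ x y : V, G.AntiAdj x y → x ∈ B → y ∈ B → False := by
    intro x y hxy hx hy
    have := clique_eq hB hx hy hxy.1
    rcases hxy.2 with e | e <;> omega
  have m13 : (v1 ∈ A ∧ v3 ∈ B) ∨ (v3 ∈ A ∧ v1 ∈ B) := by
    rcases hv1 with ha | hb <;> rcases hv3 with hc | hd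
    · exact absurd (notAA v1 v3 h.1 ha hc) (by simp)
    · exact Or.inl ⟨ha, hd⟩
    · exact Or.inr ⟨hc, hb⟩
    · exact absurd (notBB v1 v3 h.1 hb hd) (by simp)
  have m24 : (v2 ∈ A ∧ v4 ∈ B) ∨ (v4 ∈ A ∧ v2 ∈ B) := by
    rcases hv2 with ha | hb <;> rcases hv4 with hc | hd
    · exact absurd (notAA v2 v4 h.2.1 ha hc) (by simp)
    · exact Or.inl ⟨ha, hd⟩
    · exact Or.inr ⟨hc, hb⟩
    · exact absurd (notBB v2 v4 h.2.1 hb hd) (by simp)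
  rcases m13 with ⟨h1A, h3B⟩ | ⟨h3A, h1B⟩ <;> rcases m24 with ⟨h2A, h4B⟩ | ⟨h4A, h2B⟩
  · exact ⟨v1, v2, v3, v4, cross_of_square_aux hA hB h h1A h2A h3B h4B, rfl⟩
  · refine ⟨v4, v1, v2, v3, cross_of_square_aux hA hB h.rot.rot.rot h4A h1A h2B h3B, ?_⟩
    ext t; simp only [Set.mem_insert_iff, Set.mem_singleton_iff]; tauto
  · refine ⟨v2, v3, v4, v1, cross_of_square_aux hA hB h.rot h2A h3A h4B h1B, ?_⟩
    ext t; simp only [Set.mem_insert_iff, Set.mem_singleton_iff]; tauto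
  · refine ⟨v3, v4, v1, v2, cross_of_square_aux hA hB h.rot.rot h3A h4A h1B h2B, ?_⟩
    ext t; simp only [Set.mem_insert_iff, Set.mem_singleton_iff]; tauto

lemma cross_of_squareMeets {G : Trigraph V} {A B : Set V}
    (hA : G.IsStrongClique A) (hB : G.IsStrongClique B) (hd : Disjoint A B)
    {S1 S2 : Set V} (hS1 : S1 ⊆ A) (hS2 : S2 ⊆ A) (h12 : Disjoint S1 S2)
    (hm : G.SquareMeets (A ∪ B) S1 S2) :
    ∃ p q c d, G.Cross A B p q c d ∧ p ∈ S1 ∧ q ∈ S2 := by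
  obtain ⟨v1, v2, v3, v4, hsq, hsub, ⟨e1, he1, he1'⟩, ⟨e2, he2, he2'⟩⟩ := hm
  obtain ⟨p, q, c, d, hc, hset⟩ := cross_of_square hA hB hsq hsub
  have hmem : ∀ e : V, e ∈ ({v1, v2, v3, v4} : Set V) → e ∈ A → e = p ∨ e = q := by
    intro e he heA
    rw [hset] at he
    simp only [Set.mem_insert_iff, Set.mem_singleton_iff] at he
    rcases he with e | e | e | e
    · exact Or.inl e
    · exact Or.inr e
    · exact absurd (ne_of_AB hd heA (e ▸ hc.hc)) (by simp [e])
    · exact absurd (ne_of_AB hd heA (e ▸ hc.hd)) (by simp [e])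
  have h1 := hmem e1 he1 (hS1 he1')
  have h2 := hmem e2 he2 (hS2 he2')
  have hne : e1 ≠ e2 := fun e => Set.disjoint_left.1 h12 he1' (e ▸ he2')
  rcases h1 with h1 | h1 <;> rcases h2 with h2 | h2
  · exact absurd (h1.trans h2.symm) hne
  · exact ⟨p, q, c, d, hc, h1 ▸ he1', h2 ▸ he2'⟩
  · exact ⟨q, p, d, c, hc.swap, h1 ▸ he1', h2 ▸ he2'⟩
  · exact absurd (h1.trans h2.symm) hne

lemma cross_of_partitionA {G : Trigraph V} {A B : Set V} (hsc : G.SquareConnected A B)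
    {S1 S2 : Set V} (h1 : S1.Nonempty) (h2 : S2.Nonempty) (hu : S1 ∪ S2 = A)
    (hd12 : Disjoint S1 S2) :
    ∃ p q c d, G.Cross A B p q c d ∧ p ∈ S1 ∧ q ∈ S2 := by
  have hS1 : S1 ⊆ A := hu ▸ Set.subset_union_left
  have hS2 : S2 ⊆ A := hu ▸ Set.subset_union_right
  exact cross_of_squareMeets hsc.1.2.2.2.1 hsc.1.2.2.2.2.1 hsc.1.2.2.1 hS1 hS2 hd12
    (hsc.2.1 S1 S2 h1 h2 hu hd12)

lemma exists_cross {G : Trigraph V} {A B : Set V} (hsc : G.SquareConnected A B) :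
    ∃ p q c d, G.Cross A B p q c d := by
  obtain ⟨a0, ha0⟩ := hsc.1.1
  obtain ⟨b0, hb0⟩ := hsc.1.2.1
  have hpair : (∃ a1 ∈ A, a1 ≠ a0) ∨ (∃ b1 ∈ B, b1 ≠ b0) := by
    by_contra h
    push_neg at h
    exact hsc.1.2.2.2.2.2.1 ⟨a0, b0, Set.eq_singleton_iff_unique_mem.2 ⟨ha0, fun x hx =>
      by_contra fun hne => hne (h.1 x hx)⟩, Set.eq_singleton_iff_unique_mem.2 ⟨hb0, fun x hx =>
      by_contra fun hne => hne (h.2 x hx)⟩⟩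
  rcases hpair with ⟨a1, ha1, hne⟩ | ⟨b1, hb1, hne⟩
  · obtain ⟨p, q, c, d, hc, _, _⟩ := cross_of_partitionA hsc (S1 := {a0}) (S2 := A \ {a0})
      ⟨a0, rfl⟩ ⟨a1, ha1, hne⟩ (by rw [Set.singleton_union, Set.insert_diff_singleton,
        Set.insert_eq_self.2 ha0]) (Set.disjoint_left.2 (fun x hx hx' => hx'.2 hx))
    exact ⟨p, q, c, d, hc⟩
  · obtain ⟨p, q, c, d, hc, _, _⟩ := cross_of_partitionA hsc.symm (S1 := {b0}) (S2 := B \ {b0})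
      ⟨b0, rfl⟩ ⟨b1, hb1, hne⟩ (by rw [Set.singleton_union, Set.insert_diff_singleton,
        Set.insert_eq_self.2 hb0]) (Set.disjoint_left.2 (fun x hx hx' => hx'.2 hx))
    exact ⟨c, d, p, q, hc.flip⟩

/-- Every vertex of `A` has an antineighbour in `B`. -/
lemma antineighbor {G : Trigraph V} {A B : Set V} (hsc : G.SquareConnected A B)
    {a : V} (ha : a ∈ A) : ∃ c ∈ B, G.θ a c ≠ 1 := by
  obtain ⟨p0, q0, c0, d0, hc0⟩ := exists_cross hsc
  have hrest : (A \ {a}).Nonempty := by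
    by_cases h : p0 = a
    · exact ⟨q0, hc0.hq, by simp [← h, hc0.hpq'.symm]⟩
    · exact ⟨p0, hc0.hp, by simp [h]⟩
  obtain ⟨p, q, c, d, hc, hp1, _⟩ := cross_of_partitionA hsc (S1 := {a}) (S2 := A \ {a})
    ⟨a, rfl⟩ hrest (by rw [Set.singleton_union, Set.insert_diff_singleton,
      Set.insert_eq_self.2 ha]) (Set.disjoint_left.2 (fun x hx hx' => hx'.2 hx))
  have : p = a := hp1
  exact ⟨c, hc.hc, this ▸ hc.hpc⟩

end Trigraph

namespace Trigraph

variable {V V' : Type}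

/-! ### Thickening transfer lemmas -/

section Thick

variable {G : Trigraph V} {G' : Trigraph V'} {I : V' → Set V}

lemma part_clique (ht : G.IsThickening G' I) {x : V'} {u v : V}
    (hu : u ∈ I x) (hv : v ∈ I x) (hne : u ≠ v) : G.θ u v = 1 := (ht.1 x).2 hu hv hne

lemma part_eq (ht : G.IsThickening G' I) {u : V} {x y : V'}
    (hx : u ∈ I x) (hy : u ∈ I y) : x = y := by
  by_contra h
  exact Set.disjoint_left.1 (ht.2.1 x y h) hx hy

lemma ne_of_parts (ht : G.IsThickening G' I) {u v : V} {x y : V'}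
    (hu : u ∈ I x) (hv : v ∈ I y) (hxy : x ≠ y) : u ≠ v :=
  fun e => hxy (part_eq ht (e ▸ hu) hv)

lemma theta'_one (ht : G.IsThickening G' I) {x y : V'} (hxy : x ≠ y)
    (h : G'.θ x y = 1) {u v : V} (hu : u ∈ I x) (hv : v ∈ I y) : G.θ u v = 1 :=
  (ht.2.2.2 x y hxy).1 h u hu v hv

lemma theta'_negone (ht : G.IsThickening G' I) {x y : V'} (hxy : x ≠ y)
    (h : G'.θ x y = -1) {u v : V} (hu : u ∈ I x) (hv : v ∈ I y) : G.θ u v = -1 :=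
  (ht.2.2.2 x y hxy).2.1 h u hu v hv

lemma theta'_ne_one (ht : G.IsThickening G' I) {x y : V'} (hxy : x ≠ y)
    {u v : V} (hu : u ∈ I x) (hv : v ∈ I y) (h : G.θ u v ≠ 1) : G'.θ x y ≠ 1 :=
  fun e => h (theta'_one ht hxy e hu hv)

lemma theta'_ne_negone (ht : G.IsThickening G' I) {x y : V'} (hxy : x ≠ y)
    {u v : V} (hu : u ∈ I x) (hv : v ∈ I y) (h : G.θ u v ≠ -1) : G'.θ x y ≠ -1 :=
  fun e => h (theta'_negone ht hxy e hu hv)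

lemma theta'_semi_of_mixed (ht : G.IsThickening G' I) {x y : V'} (hxy : x ≠ y)
    {u v u' v' : V} (hu : u ∈ I x) (hv : v ∈ I y) (h : G.θ u v ≠ 1)
    (hu' : u' ∈ I x) (hv' : v' ∈ I y) (h' : G.θ u' v' ≠ -1) : G'.θ x y = 0 := by
  rcases G'.range_mem x y with e | e | e
  · exact absurd e (theta'_ne_one ht hxy hu hv h)
  · exact e
  · exact absurd e (theta'_ne_negone ht hxy hu' hv' h')

lemma semi_witness (ht : G.IsThickening G' I) {x y : V'} (hxy : x ≠ y)
    (h : G'.θ x y = 0) :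
    (∃ u ∈ I x, ∃ v ∈ I y, G.θ u v ≠ 1) ∧ (∃ u ∈ I x, ∃ v ∈ I y, G.θ u v ≠ -1) := by
  have hw := (ht.2.2.2 x y hxy).2.2 ⟨hxy, h⟩
  constructor
  · by_contra hc
    push_neg at hc
    exact hw.1 (fun u hu v hv => hc u hu v hv)
  · by_contra hc
    push_neg at hc
    exact hw.2 (fun u hu v hv => hc u hu v hv)

end Thick

/-! ### Claw-freeness -/

lemma not_antiAdj_of_clique {G : Trigraph V} {K : Set V} (hK : G.IsStrongClique K)
    {u v : V} (hu : u ∈ K) (hv : v ∈ K) (h : G.AntiAdj u v) : False := by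
  have := clique_eq hK hu hv h.1
  rcases h.2 with e | e <;> omega

lemma quasiline_clawfree {G : Trigraph V} (h : G.QuasiLine) : G.ClawFree := by
  rintro ⟨v, a, b, c, hva, hvb, hvc, hab, hac, hbc⟩
  obtain ⟨K1, K2, h1, h2, hN⟩ := h v
  have ma : a ∈ K1 ∪ K2 := by rw [← hN]; exact hva
  have mb : b ∈ K1 ∪ K2 := by rw [← hN]; exact hvb
  have mc : c ∈ K1 ∪ K2 := by rw [← hN]; exact hvc
  rcases ma with ma | ma <;> rcases mb with mb | mb <;> rcases mc with mc | mc
  · exact not_antiAdj_of_clique h1 ma mb hab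
  · exact not_antiAdj_of_clique h1 ma mb hab
  · exact not_antiAdj_of_clique h1 ma mc hac
  · exact not_antiAdj_of_clique h2 mb mc hbc
  · exact not_antiAdj_of_clique h1 mb mc hbc
  · exact not_antiAdj_of_clique h2 ma mc hac
  · exact not_antiAdj_of_clique h2 ma mb hab
  · exact not_antiAdj_of_clique h2 ma mb hab

lemma clawfree_of_nd {G : Trigraph V} (hnd : G.NonDegenerate) : G.ClawFree :=
  hnd.elim (fun h => quasiline_clawfree h.1) And.left

/-! ### The degenerate-configuration contradiction -/

/-- If every vertex outside `A ∪ B` is strongly complete or strongly anticomplete to the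
whole of `A ∪ B`, then `G` is degenerate or disconnected. -/
lemma T7 [Fintype V] {G : Trigraph V} (hconn : G.Connected) (hnd : G.NonDegenerate)
    {A B : Set V} (hA : G.IsStrongClique A) (hB : G.IsStrongClique B) (hdisj : Disjoint A B)
    {p0 c0 : V} (hp0 : p0 ∈ A) (hc0 : c0 ∈ B) (hpc0 : G.θ p0 c0 ≠ 1)
    (hout : ∀ v, v ∉ A ∪ B → (∀ w ∈ A ∪ B, G.θ v w = 1) ∨ (∀ w ∈ A ∪ B, G.θ v w = -1)) :
    False := by
  have hcf := clawfree_of_nd hnd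
  have hp0W : p0 ∈ A ∪ B := Or.inl hp0
  have hc0W : c0 ∈ A ∪ B := Or.inr hc0
  have hp0c0 : p0 ≠ c0 := ne_of_AB hdisj hp0 hc0
  have hp0c0' : G.AntiAdj p0 c0 := by
    refine ⟨hp0c0, ?_⟩
    rcases G.range_mem p0 c0 with e | e | e
    · exact absurd e hpc0
    · exact Or.inl e
    · exact Or.inr e
  set C : Set V := {v | v ∉ A ∪ B ∧ ∀ w ∈ A ∪ B, G.θ v w = 1} with hC
  set D : Set V := {v | v ∉ A ∪ B ∧ ∀ w ∈ A ∪ B, G.θ v w = -1} with hD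
  have hCD : ∀ v : V, v ∈ A ∪ B ∨ v ∈ C ∨ v ∈ D := by
    intro v
    by_cases hv : v ∈ A ∪ B
    · exact Or.inl hv
    · rcases hout v hv with h | h
      · exact Or.inr (Or.inl ⟨hv, h⟩)
      · exact Or.inr (Or.inr ⟨hv, h⟩)
  -- No adjacency between C and D
  have hnoCD : ∀ v ∈ C, ∀ w ∈ D, ¬ G.Adj v w := by
    intro v hv w hw hadj
    refine hcf ⟨v, w, p0, c0, hadj, ⟨fun e => hv.1 (e ▸ hp0W), Or.inl (hv.2 p0 hp0W)⟩,
      ⟨fun e => hv.1 (e ▸ hc0W), Or.inl (hv.2 c0 hc0W)⟩,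
      ⟨fun e => hw.1 (e ▸ hp0W), Or.inr (hw.2 p0 hp0W)⟩,
      ⟨fun e => hw.1 (e ▸ hc0W), Or.inr (hw.2 c0 hc0W)⟩, hp0c0'⟩
  have hCDdisj : ∀ v, v ∈ C → v ∈ D → False := by
    intro v hvC hvD
    have h1 := hvC.2 p0 hp0W
    have h2 := hvD.2 p0 hp0W
    omega
  -- D is empty, by connectivity
  have hDempty : ∀ w, w ∉ D := by
    intro w hw
    have key : ∀ t, Relation.ReflTransGen G.Adj p0 t → t ∈ A ∪ B ∨ t ∈ C := by
      intro t ht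
      induction ht with
      | refl => exact Or.inl hp0W
      | @tail b c hab hstep ih =>
        rcases hCD c with h | h | h
        · exact Or.inl h
        · exact Or.inr h
        · exfalso
          rcases ih with hbW | hbC
          · have := h.2 b hbW
            have h2 := hstep.2
            rw [G.symm b c] at h2
            rcases h2 with e | e <;> omega
          · exact hnoCD b hbC c h hstep
    rcases key w (hconn p0 w) with h | h
    · exact hw.1 h
    · exact hCDdisj w h hw
  rcases hnd with ⟨hql, hncb⟩ | ⟨_, S, hS, hS3⟩
  · -- quasi-line & not cobipartite: build a cobipartition
    obtain ⟨K1, K2, hK1, hK2, hN⟩ := hql p0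
    refine hncb ⟨A ∪ (C ∩ K1), B ∪ (C ∩ K2), ?_, ?_, ?_⟩
    · intro x hx y hy hxy
      rcases hx with hx | hx <;> rcases hy with hy | hy
      · exact hA hx hy hxy
      · have := hy.1.2 x (Or.inl hx); show G.θ x y = 1; rw [G.symm x y]; exact this
      · exact hx.1.2 y (Or.inl hy)
      · exact hK1 hx.2 hy.2 hxy
    · intro x hx y hy hxy
      rcases hx with hx | hx <;> rcases hy with hy | hy
      · exact hB hx hy hxy
      · have := hy.1.2 x (Or.inr hx); show G.θ x y = 1; rw [G.symm x y]; exact this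
      · exact hx.1.2 y (Or.inr hy)
      · exact hK2 hx.2 hy.2 hxy
    · apply Set.eq_univ_of_forall
      intro v
      rcases hCD v with hv | hv | hv
      · rcases hv with hv | hv
        · exact Or.inl (Or.inl hv)
        · exact Or.inr (Or.inl hv)
      · have hvN : v ∈ K1 ∪ K2 := by
          rw [← hN]
          refine ⟨fun e => hv.1 (e ▸ hp0W), Or.inl ?_⟩
          rw [G.symm p0 v]
          exact hv.2 p0 hp0W
        rcases hvN with h | h
        · exact Or.inl (Or.inr ⟨hv, h⟩)
        · exact Or.inr (Or.inr ⟨hv, h⟩)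
      · exact absurd hv (hDempty v)
  · -- stable set of size 3
    have h3 : ∃ x ∈ S, ∃ y ∈ S, ∃ z ∈ S, x ≠ y ∧ x ≠ z ∧ y ≠ z :=
      (Set.two_lt_ncard (S.toFinite)).1 (by omega)
    obtain ⟨x, hx, y, hy, z, hz, hxy, hxz, hyz⟩ := h3
    have haxy : G.AntiAdj x y := hS hx hy hxy
    have haxz : G.AntiAdj x z := hS hx hz hxz
    have hayz : G.AntiAdj y z := hS hy hz hyz
    have loc : ∀ u ∈ S, u ∈ A ∨ u ∈ B ∨ u ∈ C := by
      intro u _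
      rcases hCD u with h | h | h
      · rcases h with h | h
        · exact Or.inl h
        · exact Or.inr (Or.inl h)
      · exact Or.inr (Or.inr h)
      · exact absurd h (hDempty u)
    have notC : ∀ u v : V, G.AntiAdj u v → u ∈ A ∪ B → v ∈ C → False := by
      intro u v huv hu hv
      have := hv.2 u hu
      rw [G.symm v u] at this
      rcases huv.2 with e | e <;> omega
    have auxA : ∀ u v w : V, G.AntiAdj u v → G.AntiAdj u w → G.AntiAdj v w →
        u ∈ A → (v ∈ A ∨ v ∈ B ∨ v ∈ C) → (w ∈ A ∨ w ∈ B ∨ w ∈ C) → False := by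
      intro u v w huv huw hvw hu hv hw
      have hvB : v ∈ B := by
        rcases hv with h | h | h
        · exact absurd (not_antiAdj_of_clique hA hu h huv) (by simp)
        · exact h
        · exact absurd (notC u v huv (Or.inl hu) h) (by simp)
      have hwB : w ∈ B := by
        rcases hw with h | h | h
        · exact absurd (not_antiAdj_of_clique hA hu h huw) (by simp)
        · exact h
        · exact absurd (notC u w huw (Or.inl hu) h) (by simp)
      exact not_antiAdj_of_clique hB hvB hwB hvw
    have auxB : ∀ u v w : V, G.AntiAdj u v → G.AntiAdj u w → G.AntiAdj v w →
        u ∈ B → (v ∈ A ∨ v ∈ B ∨ v ∈ C) → (w ∈ A ∨ w ∈ B ∨ w ∈ C) → False := by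
      intro u v w huv huw hvw hu hv hw
      have hvA : v ∈ A := by
        rcases hv with h | h | h
        · exact h
        · exact absurd (not_antiAdj_of_clique hB hu h huv) (by simp)
        · exact absurd (notC u v huv (Or.inr hu) h) (by simp)
      have hwA : w ∈ A := by
        rcases hw with h | h | h
        · exact h
        · exact absurd (not_antiAdj_of_clique hB hu h huw) (by simp)
        · exact absurd (notC u w huw (Or.inr hu) h) (by simp)
      exact not_antiAdj_of_clique hA hvA hwA hvw
    have lx := loc x hx
    have ly := loc y hy
    have lz := loc z hz
    rcases lx with h | h | hxC
    · exact auxA x y z haxy haxz hayz h ly lz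
    · exact auxB x y z haxy haxz hayz h ly lz
    rcases ly with h | h | hyC
    · exact auxA y x z (antiAdj_symm haxy) hayz haxz h (Or.inr (Or.inr hxC)) lz
    · exact auxB y x z (antiAdj_symm haxy) hayz haxz h (Or.inr (Or.inr hxC)) lz
    rcases lz with h | h | hzC
    · exact auxA z x y (antiAdj_symm haxz) (antiAdj_symm hayz) haxy h
        (Or.inr (Or.inr hxC)) (Or.inr (Or.inr hyC))
    · exact auxB z x y (antiAdj_symm haxz) (antiAdj_symm hayz) haxy h
        (Or.inr (Or.inr hxC)) (Or.inr (Or.inr hyC))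
    -- all three in C: claw at p0
    refine hcf ⟨p0, x, y, z, ?_, ?_, ?_, haxy, haxz, hayz⟩ <;>
      refine ⟨fun e => ?_, Or.inl ?_⟩
    · exact hxC.1 (e ▸ hp0W)
    · rw [G.symm p0 x]; exact hxC.2 p0 hp0W
    · exact hyC.1 (e ▸ hp0W)
    · rw [G.symm p0 y]; exact hyC.2 p0 hp0W
    · exact hzC.1 (e ▸ hp0W)
    · rw [G.symm p0 z]; exact hzC.2 p0 hp0W

end Trigraph

namespace Trigraph

variable {V V' : Type}

lemma antiAdj_of_ne_one {G : Trigraph V} {x y : V} (hne : x ≠ y) (h : G.θ x y ≠ 1) :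
    G.AntiAdj x y := by
  refine ⟨hne, ?_⟩
  rcases G.range_mem x y with e | e | e
  · exact absurd e h
  · exact Or.inl e
  · exact Or.inr e

lemma adj_of_ne_negone {G : Trigraph V} {x y : V} (hne : x ≠ y) (h : G.θ x y ≠ -1) :
    G.Adj x y := by
  refine ⟨hne, ?_⟩
  rcases G.range_mem x y with e | e | e
  · exact Or.inl e
  · exact Or.inr e
  · exact absurd e h

section Main

variable {G : Trigraph V} {G' : Trigraph V'} {I : V' → Set V} {π : V → V'} {A B : Set V}

/-- Step 1: no part of the antithickening meets both `A` and `B`. -/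
lemma no_mixed [Fintype V] (hconn : G.Connected) (hnd : G.NonDegenerate)
    (ht : G.IsThickening G' I) (hπ : ∀ v, v ∈ I (π v)) (hsc : G.SquareConnected A B)
    {m : V'} (hma : (I m ∩ A).Nonempty) (hmb : (I m ∩ B).Nonempty) : False := by
  have hdisj : Disjoint A B := hsc.1.2.2.1
  have hcliqueA : G.IsStrongClique A := hsc.1.2.2.2.1
  have hcliqueB : G.IsStrongClique B := hsc.1.2.2.2.2.1
  obtain ⟨a, haI, haA⟩ := hma
  obtain ⟨b, hbI, hbB⟩ := hmb
  have hab : a ≠ b := ne_of_AB hdisj haA hbB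
  have hθab : G.θ a b = 1 := part_clique ht haI hbI hab
  obtain ⟨c, hcB, hac⟩ := antineighbor hsc haA
  have hbc : b ≠ c := fun e => hac (by rw [← e]; exact hθab)
  have hcI : c ∉ I m := fun h => hac (part_clique ht haI h (ne_of_AB hdisj haA hcB))
  have hcIm' : c ∈ I (π c) := hπ c
  have hmm' : m ≠ π c := fun e => hcI (by rw [e]; exact hcIm')
  have hθbc : G.θ b c = 1 := clique_eq hcliqueB hbB hcB hbc
  have hsemi : G'.θ m (π c) = 0 :=
    theta'_semi_of_mixed ht hmm' haI hcIm' hac hbI hcIm' (by rw [hθbc]; norm_num)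
  obtain ⟨a', ha'A, hba'⟩ := antineighbor hsc.symm hbB
  have haa' : a ≠ a' := fun e => hba' (by rw [← e, G.symm b a]; exact hθab)
  have ha'I : a' ∉ I m := fun h =>
    hba' (part_clique ht hbI h (ne_of_AB hdisj ha'A hbB).symm)
  have hma' : m ≠ π a' := fun e => ha'I (by rw [e]; exact hπ a')
  have hθaa' : G.θ a a' = 1 := clique_eq hcliqueA haA ha'A haa'
  have hsemi2 : G'.θ m (π a') = 0 :=
    theta'_semi_of_mixed ht hma' hbI (hπ a') hba' haI (hπ a') (by rw [hθaa']; norm_num)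
  have hm'a' : π a' = π c := by
    by_contra hne
    exact (G'.semi_matching m (π c) (π a') hmm' hma' (fun e => hne e.symm) hsemi) hsemi2
  have ha'Im' : a' ∈ I (π c) := by rw [← hm'a']; exact hπ a'
  -- Every vertex outside A ∪ B is strongly complete or anticomplete to A ∪ B.
  have hout : ∀ v, v ∉ A ∪ B →
      (∀ w ∈ A ∪ B, G.θ v w = 1) ∨ (∀ w ∈ A ∪ B, G.θ v w = -1) := by
    intro v hvW
    have hvI := hπ v
    have mkA1 : ∀ u ∈ A, G.θ v u = 1 → ∀ w ∈ A, G.θ v w = 1 := fun u hu h w hw =>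
      (homog_A hsc hvW).resolve_right (fun hh => by have := hh u hu; omega) w hw
    have mkA2 : ∀ u ∈ A, G.θ v u = -1 → ∀ w ∈ A, G.θ v w = -1 := fun u hu h w hw =>
      (homog_A hsc hvW).resolve_left (fun hh => by have := hh u hu; omega) w hw
    have mkB1 : ∀ u ∈ B, G.θ v u = 1 → ∀ w ∈ B, G.θ v w = 1 := fun u hu h w hw =>
      (homog_B hsc hvW).resolve_right (fun hh => by have := hh u hu; omega) w hw
    have mkB2 : ∀ u ∈ B, G.θ v u = -1 → ∀ w ∈ B, G.θ v w = -1 := fun u hu h w hw =>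
      (homog_B hsc hvW).resolve_left (fun hh => by have := hh u hu; omega) w hw
    by_cases h1 : π v = m
    · have hva : G.θ v a = 1 :=
        part_clique ht (by rw [h1] at hvI; exact hvI) haI (fun e => hvW (Or.inl (e ▸ haA)))
      have hvb : G.θ v b = 1 :=
        part_clique ht (by rw [h1] at hvI; exact hvI) hbI (fun e => hvW (Or.inr (e ▸ hbB)))
      exact Or.inl (fun w hw => hw.elim (mkA1 a haA hva w) (mkB1 b hbB hvb w))
    by_cases h2 : π v = π c
    · have hva : G.θ v a' = 1 :=
        part_clique ht (by rw [h2] at hvI; exact hvI) ha'Im'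
          (fun e => hvW (Or.inl (e ▸ ha'A)))
      have hvc : G.θ v c = 1 :=
        part_clique ht (by rw [h2] at hvI; exact hvI) hcIm' (fun e => hvW (Or.inr (e ▸ hcB)))
      exact Or.inl (fun w hw => hw.elim (mkA1 a' ha'A hva w) (mkB1 c hcB hvc w))
    · have hnz : G'.θ (π v) m ≠ 0 := by
        intro e
        exact (G'.semi_matching m (π c) (π v) hmm' (fun e2 => h1 e2.symm)
          (fun e2 => h2 e2.symm) hsemi) (by rw [G'.symm m (π v)]; exact e)
      rcases G'.range_mem (π v) m with e | e | e
      · have hva : G.θ v a = 1 := theta'_one ht h1 e hvI haI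
        have hvb : G.θ v b = 1 := theta'_one ht h1 e hvI hbI
        exact Or.inl (fun w hw => hw.elim (mkA1 a haA hva w) (mkB1 b hbB hvb w))
      · exact absurd e hnz
      · have hva : G.θ v a = -1 := theta'_negone ht h1 e hvI haI
        have hvb : G.θ v b = -1 := theta'_negone ht h1 e hvI hbI
        exact Or.inr (fun w hw => hw.elim (mkA2 a haA hva w) (mkB2 b hbB hvb w))
  exact T7 hconn hnd hcliqueA hcliqueB hdisj haA hcB hac hout

/-- Step 2: if `π` is constant on `B` then it is constant on `A`. -/
lemma const_transfer (ht : G.IsThickening G' I) (hπ : ∀ v, v ∈ I (π v))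
    (hsc : G.SquareConnected A B)
    (hnomix : ∀ x : V', ¬((I x ∩ A).Nonempty ∧ (I x ∩ B).Nonempty))
    (hcB : ∀ s ∈ B, ∀ s' ∈ B, π s = π s') : ∀ u ∈ A, ∀ u' ∈ A, π u = π u' := by
  by_contra h
  push_neg at h
  obtain ⟨a1, ha1, a2, ha2, hne⟩ := h
  obtain ⟨p, q, c, d, hcr, hp, hq⟩ := cross_of_partitionA hsc
    (S1 := {w | w ∈ A ∧ π w = π a1}) (S2 := {w | w ∈ A ∧ π w ≠ π a1})
    ⟨a1, ha1, rfl⟩ ⟨a2, ha2, fun e => hne e.symm⟩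
    (by
      ext w
      constructor
      · rintro (⟨h, _⟩ | ⟨h, _⟩) <;> exact h
      · intro hw
        by_cases e : π w = π a1
        · exact Or.inl ⟨hw, e⟩
        · exact Or.inr ⟨hw, e⟩)
    (Set.disjoint_left.2 (fun x hx hx' => hx'.2 hx.2))
  have hπd : π d = π c := hcB d hcr.hd c hcr.hc
  have hdI : d ∈ I (π c) := by rw [← hπd]; exact hπ d
  have hpy : π p ≠ π c := fun e =>
    hnomix (π c) ⟨⟨p, by rw [← e]; exact hπ p, hcr.hp⟩, ⟨c, hπ c, hcr.hc⟩⟩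
  have hqy : π q ≠ π c := fun e =>
    hnomix (π c) ⟨⟨q, by rw [← e]; exact hπ q, hcr.hq⟩, ⟨c, hπ c, hcr.hc⟩⟩
  have hsp : G'.θ (π p) (π c) = 0 :=
    theta'_semi_of_mixed ht hpy (hπ p) (hπ c) hcr.hpc (hπ p) hdI hcr.hpd
  have hsq2 : G'.θ (π q) (π c) = 0 :=
    theta'_semi_of_mixed ht hqy (hπ q) hdI hcr.hqd (hπ q) (hπ c) hcr.hqc
  have hpq : π p ≠ π q := fun e => hq.2 (by rw [← e]; exact hp.2)
  exact (G'.semi_matching (π c) (π p) (π q) (fun e => hpy e.symm) (fun e => hqy e.symm) hpq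
    (by rw [G'.symm (π c) (π p)]; exact hsp)) (by rw [G'.symm (π c) (π q)]; exact hsq2)

/-- Purity: a part whose semiedge is already used elsewhere, and which meets `A`,
is contained in `A`. -/
lemma purity (ht : G.IsThickening G' I) (hπ : ∀ v, v ∈ I (π v))
    (hsc : G.SquareConnected A B)
    (hnomix : ∀ x : V', ¬((I x ∩ A).Nonempty ∧ (I x ∩ B).Nonempty))
    (hnA : ∃ u ∈ A, ∃ u' ∈ A, π u ≠ π u') {x z0 : V'}
    (hx : (I x ∩ A).Nonempty) (hz0 : z0 ≠ x) (hsemi : G'.θ x z0 = 0)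
    (hz0B : ∀ s ∈ B, π s ≠ z0) : I x ⊆ A := by
  obtain ⟨a0, ha0I, ha0A⟩ := hx
  have hπa0 : π a0 = x := part_eq ht (hπ a0) ha0I
  have hS2 : ({w | w ∈ A ∧ π w ≠ x} : Set V).Nonempty := by
    obtain ⟨u, hu, u', hu', hne⟩ := hnA
    by_cases e : π u = x
    · exact ⟨u', hu', fun e2 => hne (e.trans e2.symm)⟩
    · exact ⟨u, hu, e⟩
  obtain ⟨p, q, c, d, hcr, hp, _⟩ := cross_of_partitionA hsc
    (S1 := {w | w ∈ A ∧ π w = x}) (S2 := {w | w ∈ A ∧ π w ≠ x})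
    ⟨a0, ha0A, hπa0⟩ hS2
    (by
      ext w
      constructor
      · rintro (⟨h, _⟩ | ⟨h, _⟩) <;> exact h
      · intro hw
        by_cases e : π w = x
        · exact Or.inl ⟨hw, e⟩
        · exact Or.inr ⟨hw, e⟩)
    (Set.disjoint_left.2 (fun w hw hw' => hw'.2 hw.2))
  have hpIx : p ∈ I x := by rw [← hp.2]; exact hπ p
  have hcx : π c ≠ x := fun e =>
    hnomix x ⟨⟨p, hpIx, hcr.hp⟩, ⟨c, by rw [← e]; exact hπ c, hcr.hc⟩⟩
  have hdx : π d ≠ x := fun e =>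
    hnomix x ⟨⟨p, hpIx, hcr.hp⟩, ⟨d, by rw [← e]; exact hπ d, hcr.hd⟩⟩
  have hθc : G'.θ x (π c) = -1 := by
    rcases G'.range_mem x (π c) with e | e | e
    · exact absurd e (theta'_ne_one ht (fun e2 => hcx e2.symm) hpIx (hπ c) hcr.hpc)
    · exact absurd e (G'.semi_matching x z0 (π c) (fun e2 => hz0 e2.symm)
        (fun e2 => hcx e2.symm) (fun e2 => (hz0B c hcr.hc) e2.symm) hsemi)
    · exact e
  have hθd : G'.θ x (π d) = 1 := by
    rcases G'.range_mem x (π d) with e | e | e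
    · exact e
    · exact absurd e (G'.semi_matching x z0 (π d) (fun e2 => hz0 e2.symm)
        (fun e2 => hdx e2.symm) (fun e2 => (hz0B d hcr.hd) e2.symm) hsemi)
    · exact absurd e (theta'_ne_negone ht (fun e2 => hdx e2.symm) hpIx (hπ d) hcr.hpd)
  intro w hw
  by_contra hwA
  have hwB : w ∉ B := fun h => hnomix x ⟨⟨p, hpIx, hcr.hp⟩, ⟨w, hw, h⟩⟩
  have hwW : w ∉ A ∪ B := fun h => h.elim hwA hwB
  have hwc : G.θ w c = -1 := theta'_negone ht (fun e2 => hcx e2.symm) hθc hw (hπ c)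
  have hwd : G.θ w d = 1 := theta'_one ht (fun e2 => hdx e2.symm) hθd hw (hπ d)
  rcases homog_B hsc hwW with h | h
  · have := h c hcr.hc; omega
  · have := h d hcr.hd; omega

/-- Two distinct parts meeting `A` are strongly adjacent in `G'`. -/
lemma noSemiInA (ht : G.IsThickening G' I) (hπ : ∀ v, v ∈ I (π v))
    (hsc : G.SquareConnected A B)
    (hnomix : ∀ x : V', ¬((I x ∩ A).Nonempty ∧ (I x ∩ B).Nonempty))
    (hnA : ∃ u ∈ A, ∃ u' ∈ A, π u ≠ π u') {x y : V'}
    (hx : (I x ∩ A).Nonempty) (hy : (I y ∩ A).Nonempty) (hxy : x ≠ y) :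
    G'.θ x y = 1 := by
  obtain ⟨ax, haxI, haxA⟩ := hx
  obtain ⟨ay, hayI, hayA⟩ := hy
  have hne : ax ≠ ay := ne_of_parts ht haxI hayI hxy
  have hθ : G.θ ax ay = 1 := clique_eq hsc.1.2.2.2.1 haxA hayA hne
  rcases G'.range_mem x y with e | e0 | e
  · exact e
  · exfalso
    have hyB : ∀ s ∈ B, π s ≠ y := fun s hs e =>
      hnomix y ⟨⟨ay, hayI, hayA⟩, ⟨s, by rw [← e]; exact hπ s, hs⟩⟩
    have hxB : ∀ s ∈ B, π s ≠ x := fun s hs e =>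
      hnomix x ⟨⟨ax, haxI, haxA⟩, ⟨s, by rw [← e]; exact hπ s, hs⟩⟩
    have hpx : I x ⊆ A := purity ht hπ hsc hnomix hnA ⟨ax, haxI, haxA⟩ hxy.symm e0 hyB
    have hpy : I y ⊆ A := purity ht hπ hsc hnomix hnA ⟨ay, hayI, hayA⟩ hxy
      (by rw [G'.symm y x]; exact e0) hxB
    obtain ⟨⟨u, hu, v, hv, hne1⟩, -⟩ := semi_witness ht hxy e0
    exact hne1 (clique_eq hsc.1.2.2.2.1 (hpx hu) (hpy hv) (ne_of_parts ht hu hv hxy))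
  · exact absurd e (theta'_ne_negone ht hxy haxI hayI (by rw [hθ]; norm_num))

/-- A part disjoint from `A ∪ B` has no semiedge to a part meeting `A`. -/
lemma noSemiOut (ht : G.IsThickening G' I) (hπ : ∀ v, v ∈ I (π v))
    (hsc : G.SquareConnected A B)
    (hnomix : ∀ x : V', ¬((I x ∩ A).Nonempty ∧ (I x ∩ B).Nonempty))
    (hnA : ∃ u ∈ A, ∃ u' ∈ A, π u ≠ π u') {z x : V'}
    (hzA : ∀ w ∈ I z, w ∉ A) (hzB : ∀ w ∈ I z, w ∉ B)
    (hx : (I x ∩ A).Nonempty) : G'.θ z x ≠ 0 := by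
  intro h0
  obtain ⟨a0, ha0I, ha0A⟩ := hx
  have hzx : z ≠ x := fun e => hzA a0 (by rw [e]; exact ha0I) ha0A
  have hpx : I x ⊆ A := purity ht hπ hsc hnomix hnA ⟨a0, ha0I, ha0A⟩ hzx
    (by rw [G'.symm x z]; exact h0) (fun s hs e => hzB s (by rw [← e]; exact hπ s) hs)
  obtain ⟨⟨u, hu, w, hw, hne1⟩, ⟨u', hu', w', hw', hne2⟩⟩ := semi_witness ht hzx h0
  have hwA := hpx hw
  have hw'A := hpx hw'
  have huW : u ∉ A ∪ B := fun h => h.elim (hzA u hu) (hzB u hu)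
  have hu'W : u' ∉ A ∪ B := fun h => h.elim (hzA u' hu') (hzB u' hu')
  have hsaA : ∀ w2 ∈ A, G.θ u w2 = -1 :=
    (homog_A hsc huW).resolve_left (fun hh => hne1 (hh w hwA))
  have hscA : ∀ w2 ∈ A, G.θ u' w2 = 1 :=
    (homog_A hsc hu'W).resolve_right (fun hh => hne2 (by have := hh w' hw'A; omega))
  obtain ⟨u1, hu1, u2, hu2, hneπ⟩ := hnA
  obtain ⟨x', hx'A, hx'ne⟩ : ∃ x', (∃ a'' ∈ A, a'' ∈ I x') ∧ x' ≠ x := by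
    by_cases e : π u1 = x
    · exact ⟨π u2, ⟨u2, hu2, hπ u2⟩, fun e2 => hneπ (e.trans e2.symm)⟩
    · exact ⟨π u1, ⟨u1, hu1, hπ u1⟩, e⟩
  obtain ⟨a'', ha''A, ha''I⟩ := hx'A
  have hzx' : z ≠ x' := fun e => hzA a'' (by rw [e]; exact ha''I) ha''A
  have h1 : G'.θ z x' ≠ 1 := theta'_ne_one ht hzx' hu ha''I
    (by have := hsaA a'' ha''A; omega)
  have h2 : G'.θ z x' ≠ -1 := theta'_ne_negone ht hzx' hu' ha''I
    (by have := hscA a'' ha''A; omega)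
  have h0' : G'.θ z x' = 0 := by rcases G'.range_mem z x' with e | e | e <;> tauto
  exact (G'.semi_matching z x x' hzx hzx' (fun e => hx'ne e.symm) h0) h0'

/-- The quotient partitions lift to squares: partitions of the set of `A`-parts are
square-connected in `G'`. -/
lemma partitionMeets (ht : G.IsThickening G' I) (hπ : ∀ v, v ∈ I (π v))
    (hsc : G.SquareConnected A B)
    (hnomix : ∀ x : V', ¬((I x ∩ A).Nonempty ∧ (I x ∩ B).Nonempty))
    {X' X'' : Set V'} (h1 : X'.Nonempty) (h2 : X''.Nonempty)
    (hu : X' ∪ X'' = {x | (I x ∩ A).Nonempty}) (hd : Disjoint X' X'') :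
    G'.SquareMeets ({x | (I x ∩ A).Nonempty} ∪ {x | (I x ∩ B).Nonempty}) X' X'' := by
  obtain ⟨p, q, c, d, hcr, hp, hq⟩ := cross_of_partitionA hsc
    (S1 := {w | w ∈ A ∧ π w ∈ X'}) (S2 := {w | w ∈ A ∧ π w ∈ X''})
    (by
      obtain ⟨x', hx'⟩ := h1
      have : x' ∈ {x | (I x ∩ A).Nonempty} := by rw [← hu]; exact Or.inl hx'
      obtain ⟨a, haI, haA⟩ := this
      exact ⟨a, haA, by rw [part_eq ht (hπ a) haI]; exact hx'⟩)
    (by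
      obtain ⟨x', hx'⟩ := h2
      have : x' ∈ {x | (I x ∩ A).Nonempty} := by rw [← hu]; exact Or.inr hx'
      obtain ⟨a, haI, haA⟩ := this
      exact ⟨a, haA, by rw [part_eq ht (hπ a) haI]; exact hx'⟩)
    (by
      ext w
      constructor
      · rintro (⟨h, _⟩ | ⟨h, _⟩) <;> exact h
      · intro hw
        have : π w ∈ X' ∪ X'' := by rw [hu]; exact ⟨w, hπ w, hw⟩
        rcases this with h | h
        · exact Or.inl ⟨hw, h⟩
        · exact Or.inr ⟨hw, h⟩)
    (Set.disjoint_left.2 (fun w hw hw' => Set.disjoint_left.1 hd hw.2 hw'.2))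
  have hpq : π p ≠ π q := fun e => Set.disjoint_left.1 hd hp.2 (e ▸ hq.2)
  have hpc : π p ≠ π c := fun e =>
    hnomix (π p) ⟨⟨p, hπ p, hcr.hp⟩, ⟨c, by rw [e]; exact hπ c, hcr.hc⟩⟩
  have hpd : π p ≠ π d := fun e =>
    hnomix (π p) ⟨⟨p, hπ p, hcr.hp⟩, ⟨d, by rw [e]; exact hπ d, hcr.hd⟩⟩
  have hqc : π q ≠ π c := fun e =>
    hnomix (π q) ⟨⟨q, hπ q, hcr.hq⟩, ⟨c, by rw [e]; exact hπ c, hcr.hc⟩⟩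
  have hqd : π q ≠ π d := fun e =>
    hnomix (π q) ⟨⟨q, hπ q, hcr.hq⟩, ⟨d, by rw [e]; exact hπ d, hcr.hd⟩⟩
  have hcd : π c ≠ π d := by
    intro e
    have hdIc : d ∈ I (π c) := by rw [e]; exact hπ d
    have hs1 : G'.θ (π p) (π c) = 0 :=
      theta'_semi_of_mixed ht hpc (hπ p) (hπ c) hcr.hpc (hπ p) hdIc hcr.hpd
    have hs2 : G'.θ (π q) (π c) = 0 :=
      theta'_semi_of_mixed ht hqc (hπ q) hdIc hcr.hqd (hπ q) (hπ c) hcr.hqc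
    exact (G'.semi_matching (π c) (π p) (π q) (fun e2 => hpc e2.symm)
      (fun e2 => hqc e2.symm) hpq (by rw [G'.symm (π c) (π p)]; exact hs1))
      (by rw [G'.symm (π c) (π q)]; exact hs2)
  refine ⟨π p, π q, π c, π d, ⟨?_, ?_, ?_, ?_, ?_, ?_⟩, ?_, ⟨π p, by simp, hp.2⟩,
    ⟨π q, by simp, hq.2⟩⟩
  · exact antiAdj_of_ne_one hpc (theta'_ne_one ht hpc (hπ p) (hπ c) hcr.hpc)
  · exact antiAdj_of_ne_one hqd (theta'_ne_one ht hqd (hπ q) (hπ d) hcr.hqd)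
  · exact adj_of_ne_negone hpq (theta'_ne_negone ht hpq (hπ p) (hπ q)
      (by rw [hcr.hpq]; norm_num))
  · exact adj_of_ne_negone (fun e => hqc e) (theta'_ne_negone ht hqc (hπ q) (hπ c) hcr.hqc)
  · exact adj_of_ne_negone hcd (theta'_ne_negone ht hcd (hπ c) (hπ d)
      (by rw [hcr.hcd]; norm_num))
  · refine adj_of_ne_negone (fun e => hpd e.symm) (theta'_ne_negone ht
      (fun e => hpd e.symm) (hπ d) (hπ p) ?_)
    rw [G.symm d p]; exact hcr.hpd
  · intro t htmem
    simp only [Set.mem_insert_iff, Set.mem_singleton_iff] at htmem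
    rcases htmem with rfl | rfl | rfl | rfl
    · exact Or.inl ⟨p, hπ p, hcr.hp⟩
    · exact Or.inl ⟨q, hπ q, hcr.hq⟩
    · exact Or.inr ⟨c, hπ c, hcr.hc⟩
    · exact Or.inr ⟨d, hπ d, hcr.hd⟩

end Main

end Trigraph

namespace Trigraph

variable {V V' : Type}

section Final

variable {G : Trigraph V} {G' : Trigraph V'} {I : V' → Set V} {π : V → V'} {A B : Set V}

/-- Step 3: if `π` is non-constant on both sides, the quotient pair is a
square-connected homogeneous pair in `G'`, contradicting laminarity. -/
lemma step3 (ht : G.IsThickening G' I) (hπ : ∀ v, v ∈ I (π v))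
    (hsc : G.SquareConnected A B) (hlam : G'.Laminar)
    (hnomix : ∀ x : V', ¬((I x ∩ A).Nonempty ∧ (I x ∩ B).Nonempty))
    (hnA : ∃ u ∈ A, ∃ u' ∈ A, π u ≠ π u')
    (hnB : ∃ u ∈ B, ∃ u' ∈ B, π u ≠ π u') : False := by
  have hnomix' : ∀ x : V', ¬((I x ∩ B).Nonempty ∧ (I x ∩ A).Nonempty) :=
    fun x h => hnomix x ⟨h.2, h.1⟩
  set 𝒜 : Set V' := {x | (I x ∩ A).Nonempty} with h𝒜
  set ℬ : Set V' := {x | (I x ∩ B).Nonempty} with hℬ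
  obtain ⟨a0, ha0⟩ := hsc.1.1
  obtain ⟨b0, hb0⟩ := hsc.1.2.1
  refine hlam ⟨𝒜, ℬ, ⟨⟨π a0, a0, hπ a0, ha0⟩, ⟨π b0, b0, hπ b0, hb0⟩,
    Set.disjoint_left.2 (fun x hx1 hx2 => hnomix x ⟨hx1, hx2⟩), ?_, ?_, ?_, ?_⟩, ?_, ?_⟩
  · -- 𝒜 strong clique
    intro x hx y hy hxy
    exact noSemiInA ht hπ hsc hnomix hnA hx hy hxy
  · -- ℬ strong clique
    intro x hx y hy hxy
    exact noSemiInA ht hπ hsc.symm hnomix' hnB hx hy hxy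
  · -- not both singletons
    rintro ⟨x, y, hX, hY⟩
    obtain ⟨u1, hu1, u2, hu2, hne⟩ := hnA
    have m1 : π u1 ∈ 𝒜 := ⟨u1, hπ u1, hu1⟩
    have m2 : π u2 ∈ 𝒜 := ⟨u2, hπ u2, hu2⟩
    rw [hX] at m1 m2
    exact hne (m1.trans m2.symm)
  · -- homogeneity
    intro v hv
    have hvA : ∀ w ∈ I v, w ∉ A := fun w hwI hwA => hv (Or.inl ⟨w, hwI, hwA⟩)
    have hvB : ∀ w ∈ I v, w ∉ B := fun w hwI hwB => hv (Or.inr ⟨w, hwI, hwB⟩)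
    obtain ⟨u0, hu0⟩ := (ht.1 v).1
    have hu0W : u0 ∉ A ∪ B := fun h => h.elim (hvA u0 hu0) (hvB u0 hu0)
    constructor
    · rcases homog_A hsc hu0W with hpos | hneg
      · left
        intro t htv w hw
        rw [Set.mem_singleton_iff] at htv
        subst htv
        obtain ⟨aw, hawI, hawA⟩ := hw
        have hvw : t ≠ w := fun e => hvA aw (by rw [e]; exact hawI) hawA
        show G'.θ t w = 1
        rcases G'.range_mem t w with e | e | e
        · exact e
        · exact absurd e (noSemiOut ht hπ hsc hnomix hnA hvA hvB ⟨aw, hawI, hawA⟩)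
        · exact absurd e (theta'_ne_negone ht hvw hu0 hawI
            (by have := hpos aw hawA; omega))
      · right
        intro t htv w hw
        rw [Set.mem_singleton_iff] at htv
        subst htv
        obtain ⟨aw, hawI, hawA⟩ := hw
        have hvw : t ≠ w := fun e => hvA aw (by rw [e]; exact hawI) hawA
        show G'.θ t w = -1
        rcases G'.range_mem t w with e | e | e
        · exact absurd e (theta'_ne_one ht hvw hu0 hawI
            (by have := hneg aw hawA; omega))
        · exact absurd e (noSemiOut ht hπ hsc hnomix hnA hvA hvB ⟨aw, hawI, hawA⟩)
        · exact e
    · rcases homog_B hsc hu0W with hpos | hneg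
      · left
        intro t htv w hw
        rw [Set.mem_singleton_iff] at htv
        subst htv
        obtain ⟨aw, hawI, hawA⟩ := hw
        have hvw : t ≠ w := fun e => hvB aw (by rw [e]; exact hawI) hawA
        show G'.θ t w = 1
        rcases G'.range_mem t w with e | e | e
        · exact e
        · exact absurd e (noSemiOut ht hπ hsc.symm hnomix' hnB hvB hvA ⟨aw, hawI, hawA⟩)
        · exact absurd e (theta'_ne_negone ht hvw hu0 hawI
            (by have := hpos aw hawA; omega))
      · right
        intro t htv w hw
        rw [Set.mem_singleton_iff] at htv
        subst htv
        obtain ⟨aw, hawI, hawA⟩ := hw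
        have hvw : t ≠ w := fun e => hvB aw (by rw [e]; exact hawI) hawA
        show G'.θ t w = -1
        rcases G'.range_mem t w with e | e | e
        · exact absurd e (theta'_ne_one ht hvw hu0 hawI
            (by have := hneg aw hawA; omega))
        · exact absurd e (noSemiOut ht hπ hsc.symm hnomix' hnB hvB hvA ⟨aw, hawI, hawA⟩)
        · exact e
  · -- partitions of 𝒜
    intro X' X'' h1 h2 huni hd12
    exact partitionMeets ht hπ hsc hnomix h1 h2 huni hd12
  · -- partitions of ℬ
    intro Y' Y'' h1 h2 huni hd12
    have := partitionMeets ht hπ hsc.symm hnomix' h1 h2 huni hd12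
    exact this.comm

/-- The key lemma: a square-connected pair is contracted by any laminar antithickening
of a connected non-degenerate trigraph. -/
lemma key_lemma [Fintype V] (hconn : G.Connected) (hnd : G.NonDegenerate)
    (hsc : G.SquareConnected A B) (ht : G.IsThickening G' I) (hlam : G'.Laminar) :
    ∃ a b : V', G'.SemiAdj a b ∧ A ⊆ I a ∧ B ⊆ I b := by
  have hcov : ∀ w : V, ∃ x, w ∈ I x := by
    intro w
    have hw : w ∈ ⋃ v, I v := ht.2.2.1 ▸ Set.mem_univ w
    exact Set.mem_iUnion.1 hw
  choose π hπ using hcov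
  have hnomix : ∀ x : V', ¬((I x ∩ A).Nonempty ∧ (I x ∩ B).Nonempty) :=
    fun x h => no_mixed hconn hnd ht hπ hsc h.1 h.2
  have hnomix' : ∀ x : V', ¬((I x ∩ B).Nonempty ∧ (I x ∩ A).Nonempty) :=
    fun x h => hnomix x ⟨h.2, h.1⟩
  have hconstA : ∀ u ∈ A, ∀ u' ∈ A, π u = π u' := by
    by_contra h
    push_neg at h
    obtain ⟨u, hu, u', hu', hne⟩ := h
    have hnA : ∃ u ∈ A, ∃ u' ∈ A, π u ≠ π u' := ⟨u, hu, u', hu', hne⟩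
    have hnB : ∃ s ∈ B, ∃ s' ∈ B, π s ≠ π s' := by
      by_contra h2
      push_neg at h2
      exact hne (const_transfer ht hπ hsc hnomix h2 u hu u' hu')
    exact step3 ht hπ hsc hlam hnomix hnA hnB
  have hconstB : ∀ s ∈ B, ∀ s' ∈ B, π s = π s' :=
    const_transfer ht hπ hsc.symm hnomix' hconstA
  obtain ⟨a0, ha0⟩ := hsc.1.1
  obtain ⟨b0, hb0⟩ := hsc.1.2.1
  have hsubA : A ⊆ I (π a0) := fun w hw => by
    rw [← hconstA w hw a0 ha0]; exact hπ w
  have hsubB : B ⊆ I (π b0) := fun w hw => by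
    rw [← hconstB w hw b0 hb0]; exact hπ w
  obtain ⟨p, q, c, d, hcr⟩ := exists_cross hsc
  have hpa : p ∈ I (π a0) := hsubA hcr.hp
  have hca : c ∈ I (π b0) := hsubB hcr.hc
  have hda : d ∈ I (π b0) := hsubB hcr.hd
  have hne : π a0 ≠ π b0 := fun e =>
    hcr.hpc (part_clique ht hpa (by rw [e]; exact hca)
      (ne_of_AB hsc.1.2.2.1 hcr.hp hcr.hc))
  exact ⟨π a0, π b0, ⟨hne, theta'_semi_of_mixed ht hne hpa hca hcr.hpc hpa hda hcr.hpd⟩,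
    hsubA, hsubB⟩

end Final

end Trigraph
/-- In an optimal antithickening of a connected non-degenerate trigraph,
the union of two intersecting square-connected homogeneous pairs of strong cliques
(without skew intersection) is contained in the preimages of a semiadjacent pair. -/
theorem squareConnected_union_contained_in_semiedge {V V' : Type} [Fintype V] [Fintype V']
    (G : Trigraph V) (hconn : G.Connected) (hnd : G.NonDegenerate)
    (A1 B1 A2 B2 : Set V)
    (h1 : G.SquareConnected A1 B1) (h2 : G.SquareConnected A2 B2)
    (hskew : ¬ Trigraph.SkewIntersection A1 B1 A2 B2)
    (hA : (A1 ∩ A2).Nonempty) (hB : (B1 ∩ B2).Nonempty)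
    (G' : Trigraph V') (I : V' → Set V) (hopt : G.OptimalAntithickening G' I) :
    ∃ a b : V', G'.SemiAdj a b ∧ A1 ∪ A2 ⊆ I a ∧ B1 ∪ B2 ⊆ I b := by
  obtain ⟨ht, hlam, -⟩ := hopt
  obtain ⟨a1, b1, hs1, hA1, hB1⟩ := Trigraph.key_lemma hconn hnd h1 ht hlam
  obtain ⟨a2, b2, hs2, hA2, hB2⟩ := Trigraph.key_lemma hconn hnd h2 ht hlam
  obtain ⟨x, hx1, hx2⟩ := hA
  obtain ⟨y, hy1, hy2⟩ := hB
  have ea : a1 = a2 := Trigraph.part_eq ht (hA1 hx1) (hA2 hx2)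
  have eb : b1 = b2 := Trigraph.part_eq ht (hB1 hy1) (hB2 hy2)
  exact ⟨a1, b1, hs1, Set.union_subset hA1 (by rw [ea]; exact hA2),
    Set.union_subset hB1 (by rw [eb]; exact hB2)⟩
end
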